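/- arXiv:1706.03306 — 9 statements merged into one kernel-verified Lean document; each statement's English description precedes it below -/
import Mathlib

section
/- There exists a constant c > 0 and an integer N such that for all integers n ≥ N, f_3(n, 9, 6) ≥ c · n^{5/3}. -/
open Finset

/-- A hypergraph `H` is `G_r(v,e)`-free if any `e` distinct edges span at least `v+1` vertices. -/
def GFree {V : Type*} [DecidableEq V] (H : Finset (Finset V)) (v e : ℕ) : Prop :=
  ∀ S ⊆ H, S.card = e → v + 1 ≤ (S.biUnion id).card

/-- `extremalF r n v e` is the maximum number of edges of a `G_r(v,e)`-free `r`-uniform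
hypergraph on `n` vertices. -/
noncomputable def extremalF (r n v e : ℕ) : ℕ :=
  sSup {m : ℕ | ∃ H : Finset (Finset (Fin n)),
    (∀ A ∈ H, A.card = r) ∧ GFree H v e ∧ H.card = m}

/-!
Take a uniformly random set of `M = ⌈n^{5/3}⌉` triples of `[n]`. There are at most
`C(n,9) C(84,6) = O(n^9)` configurations (six triples on at most nine vertices), and each lies in
the random set with probability `C(M,6) / C(C(n,3),6) = O((M / n^3)^6)`. So the expected number
of configurations in it is `O(M^6 / n^9)`, at most `M / 2` for large `n`, and deleting one triple
from each configuration in a good choice leaves a `G_3(9,6)`-free hypergraph with at least `M / 2`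
edges (the deletion argument of Brown, Erdős and Sós).
-/

section Deletion

variable {α : Type*} [DecidableEq α]

theorem exists_transversal_card_le (B : Finset (Finset α)) (hB : ∀ S ∈ B, S.Nonempty) :
    ∃ R : Finset α, #R ≤ #B ∧ ∀ S ∈ B, ∃ a ∈ S, a ∈ R := by
  induction B using Finset.induction_on with
  | empty => exact ⟨∅, by simp⟩
  | insert S B hSB ih =>
    obtain ⟨R, hR, hRB⟩ := ih fun T hT => hB T (mem_insert_of_mem hT)
    obtain ⟨a, ha⟩ := hB S (mem_insert_self S B)
    refine ⟨insert a R, ?_, ?_⟩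
    · rw [card_insert_of_notMem hSB]
      exact (card_insert_le a R).trans (by omega)
    · rintro T hT
      rcases mem_insert.mp hT with rfl | hT
      · exact ⟨a, ha, mem_insert_self a R⟩
      · obtain ⟨b, hbT, hbR⟩ := hRB T hT
        exact ⟨b, hbT, mem_insert_of_mem hbR⟩

/-- The alteration step: delete one element of every bad set lying in `H`. -/
theorem exists_subset_forall_not_subset (H : Finset α) (Bad : Finset (Finset α))
    (hBad : ∀ S ∈ Bad, S.Nonempty) :
    ∃ H' ⊆ H, (∀ S ∈ Bad, ¬S ⊆ H') ∧ #H ≤ #H' + #{S ∈ Bad | S ⊆ H} := by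
  obtain ⟨R, hR, hRhit⟩ := exists_transversal_card_le {S ∈ Bad | S ⊆ H}
    fun S hS => hBad S (mem_filter.mp hS).1
  refine ⟨H \ R, sdiff_subset, fun S hS hSH => ?_, ?_⟩
  · obtain ⟨a, haS, haR⟩ := hRhit S (mem_filter.mpr ⟨hS, hSH.trans sdiff_subset⟩)
    exact (mem_sdiff.mp (hSH haS)).2 haR
  · exact card_le_card_sdiff_add_card.trans (Nat.add_le_add_left hR _)

/-- First moment: a fixed `k`-subset of `T` lies in a uniformly random `M`-subset of `T` with
probability `M.choose k / (#T).choose k`. -/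
theorem exists_mem_powersetCard_card_filter_subset_mul_le {T : Finset α}
    {Bad : Finset (Finset α)} {k M : ℕ} (hBad : Bad ⊆ T.powersetCard k) (hkM : k ≤ M)
    (hMT : M ≤ #T) :
    ∃ H ∈ T.powersetCard M, #{S ∈ Bad | S ⊆ H} * (#T).choose k ≤ #Bad * M.choose k := by
  set P := T.powersetCard M
  have hsum : ∑ H ∈ P, #{S ∈ Bad | S ⊆ H} = #Bad * (#T - k).choose (M - k) := by
    simp_rw [card_filter]
    rw [sum_comm, ← smul_eq_mul, ← sum_const]
    refine sum_congr rfl fun S hS => ?_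
    obtain ⟨hST, hSk⟩ := mem_powersetCard.mp (hBad hS)
    rw [← card_filter, ← hSk]
    exact card_filter_powersetCard_subset S T M hST (hSk ▸ hkM)
  obtain ⟨H, hH, hle⟩ : ∃ H ∈ P, #{S ∈ Bad | S ⊆ H} * (#T).choose M
      ≤ #Bad * (#T - k).choose (M - k) := by
    refine exists_le_of_sum_le (powersetCard_nonempty.mpr hMT) ?_
    rw [← sum_mul, hsum, sum_const, card_powersetCard, smul_eq_mul, mul_comm]
  refine ⟨H, hH, Nat.le_of_mul_le_mul_right ?_ (Nat.choose_pos (by omega : M - k ≤ #T - k))⟩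
  calc #{S ∈ Bad | S ⊆ H} * (#T).choose k * (#T - k).choose (M - k)
      = #{S ∈ Bad | S ⊆ H} * (#T).choose M * M.choose k := by
        rw [mul_assoc, mul_assoc, ← Nat.choose_mul hkM]
    _ ≤ #Bad * (#T - k).choose (M - k) * M.choose k := Nat.mul_le_mul_right _ hle
    _ = #Bad * M.choose k * (#T - k).choose (M - k) := by ring

end Deletion

section Configurations

variable (V : Type*) [Fintype V] [DecidableEq V]

/-- The `(v, e)`-configurations of `r`-sets, in the terminology of Brown, Erdős and Sós. -/
def configurations (r v e : ℕ) : Finset (Finset (Finset V)) :=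
  {S ∈ powersetCard e (powersetCard r univ) | #(S.biUnion id) ≤ v}

variable {V}

theorem card_configurations_le {r v : ℕ} (e : ℕ) (hv : v ≤ Fintype.card V) :
    #(configurations V r v e) ≤ (Fintype.card V).choose v * (v.choose r).choose e := by
  have hsub : configurations V r v e
      ⊆ (powersetCard v univ).biUnion fun U => powersetCard e (powersetCard r U) := by
    intro S hS
    obtain ⟨⟨hSr, hSe⟩, hSv⟩ := by
      simpa only [configurations, mem_filter, mem_powersetCard] using hS
    obtain ⟨U, hSU, -, hU⟩ := exists_subsuperset_card_eq (subset_univ _) hSv (by simpa using hv)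
    refine mem_biUnion.mpr ⟨U, mem_powersetCard.mpr ⟨subset_univ U, hU⟩,
      mem_powersetCard.mpr ⟨fun A hA => mem_powersetCard.mpr ⟨?_, ?_⟩, hSe⟩⟩
    · exact (subset_biUnion_of_mem id hA).trans hSU
    · exact (mem_powersetCard.mp (hSr hA)).2
  calc #(configurations V r v e) ≤ _ := card_le_card hsub
    _ ≤ ∑ U ∈ powersetCard v univ, #(powersetCard e (powersetCard r U)) := card_biUnion_le
    _ = _ := by
      rw [sum_congr rfl fun U hU => by
        rw [card_powersetCard, card_powersetCard, (mem_powersetCard.mp hU).2]]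
      simp

theorem gFree_of_forall_configurations_not_subset {r v e : ℕ} {H : Finset (Finset V)}
    (hr : ∀ A ∈ H, #A = r) (hH : ∀ S ∈ configurations V r v e, ¬S ⊆ H) :
    GFree H v e := by
  intro S hSH hSe
  by_contra! hSv
  refine hH S ?_ hSH
  simp only [configurations, mem_filter, mem_powersetCard]
  refine ⟨⟨fun A hA => mem_powersetCard.mpr ⟨subset_univ A, hr A (hSH hA)⟩, hSe⟩, ?_⟩
  omega

end Configurations

theorem card_le_extremalF {r n v e : ℕ} {H : Finset (Finset (Fin n))} (hr : ∀ A ∈ H, #A = r)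
    (hH : GFree H v e) : #H ≤ extremalF r n v e :=
  le_csSup ⟨Fintype.card (Finset (Fin n)), by rintro m ⟨G, -, -, rfl⟩; exact card_le_univ G⟩
    ⟨H, hr, hH, rfl⟩

theorem le_two_mul_extremalF {r n v e M : ℕ} (he : e ≠ 0) (hv : v ≤ n) (heM : e ≤ M)
    (hM : M ≤ n.choose r)
    (h : 2 * (n.choose v * (v.choose r).choose e) * M.choose e ≤ M * (n.choose r).choose e) :
    M ≤ 2 * extremalF r n v e := by
  classical
  set T : Finset (Finset (Fin n)) := powersetCard r univ
  have hT : #T = n.choose r := by simp [T]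
  obtain ⟨H, hHT, hcount⟩ := exists_mem_powersetCard_card_filter_subset_mul_le
    (T := T) (Bad := configurations (Fin n) r v e) (filter_subset _ _) heM (hT ▸ hM)
  obtain ⟨hHT, hHM⟩ := mem_powersetCard.mp hHT
  obtain ⟨H', hH'H, hH'free, hHH'⟩ := exists_subset_forall_not_subset H
    (configurations (Fin n) r v e) fun S hS => by
      simp only [configurations, mem_filter, mem_powersetCard] at hS
      exact card_pos.mp (by omega)
  have hr : ∀ A ∈ H', #A = r := fun A hA => (mem_powersetCard.mp (hHT (hH'H hA))).2
  have hH' : #H' ≤ extremalF r n v e :=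
    card_le_extremalF hr (gFree_of_forall_configurations_not_subset hr hH'free)
  have hpos : 0 < (n.choose r).choose e := Nat.choose_pos (heM.trans hM)
  have hbad : 2 * #{S ∈ configurations (Fin n) r v e | S ⊆ H} ≤ M := by
    refine Nat.le_of_mul_le_mul_right ?_ hpos
    calc 2 * #{S ∈ configurations (Fin n) r v e | S ⊆ H} * (n.choose r).choose e
        ≤ 2 * (#(configurations (Fin n) r v e) * M.choose e) := by
          rw [mul_assoc, ← hT]; exact Nat.mul_le_mul_left 2 hcount
      _ ≤ 2 * (n.choose v * (v.choose r).choose e) * M.choose e := by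
          rw [← mul_assoc]
          gcongr
          simpa using card_configurations_le (V := Fin n) (r := r) e (by simpa using hv)
      _ ≤ M * (n.choose r).choose e := h
  omega

theorem half_pow_div_factorial_le_choose {n k : ℕ} (h : 2 * k ≤ n + 2) :
    ((n : ℝ) / 2) ^ k / k.factorial ≤ n.choose k := by
  refine le_trans ?_ (Nat.pow_le_choose k n)
  gcongr
  rw [Nat.cast_sub (by omega)]
  have : (2 * k : ℝ) ≤ n + 2 := by exact_mod_cast h
  push_cast
  linarith

theorem pow_nine_div_le_choose_three {n : ℕ} {y : ℝ} (hn : (n : ℝ) = y ^ 3) (hy : 2 ≤ y) :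
    y ^ 9 / 48 ≤ n.choose 3 := by
  have h4 : 4 ≤ n := by
    have : (4 : ℝ) ≤ n := by rw [hn]; nlinarith [pow_le_pow_left₀ (by norm_num) hy 3]
    exact_mod_cast this
  calc (y ^ 9 / 48 : ℝ) = ((n : ℝ) / 2) ^ 3 / (3 : ℕ).factorial := by
        rw [hn]; norm_num [Nat.factorial]; ring
    _ ≤ n.choose 3 := half_pow_div_factorial_le_choose (by omega)

theorem deletion_condition_f3_96 {n M : ℕ} {y : ℝ} (hn : (n : ℝ) = y ^ 3)
    (hM : (M : ℝ) ≤ 2 * y ^ 5) (hy : 64 * ((Nat.choose 9 3).choose 6 : ℝ) * 96 ^ 6 ≤ y) :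
    M ≤ n.choose 3 ∧
      2 * (n.choose 9 * (Nat.choose 9 3).choose 6) * M.choose 6 ≤ M * (n.choose 3).choose 6 := by
  set K : ℝ := (((Nat.choose 9 3).choose 6 : ℕ) : ℝ)
  set N := n.choose 3
  have hK : 1 ≤ K := Nat.one_le_cast.mpr (Nat.choose_pos (by decide))
  have hy96 : 96 ≤ y := by nlinarith
  have hN := pow_nine_div_le_choose_three hn (by linarith)
  have hMN : (M : ℝ) ≤ N := by
    have : 2 * y ^ 5 ≤ y ^ 9 / 48 := by nlinarith [pow_le_pow_left₀ (by norm_num) hy96 4]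
    linarith
  refine ⟨by exact_mod_cast hMN, ?_⟩
  have hN10 : 10 ≤ N := by
    have : (10 : ℝ) ≤ N := by nlinarith [pow_le_pow_left₀ (by norm_num) hy96 9]
    exact_mod_cast this
  have h9 : (n.choose 9 : ℝ) ≤ y ^ 27 := by
    rw [show y ^ 27 = (n : ℝ) ^ 9 by rw [hn]; ring]; exact_mod_cast Nat.choose_le_pow n 9
  have hM6 : (M.choose 6 : ℝ) ≤ M ^ 6 / (6 : ℕ).factorial := Nat.choose_le_pow_div 6 M
  have hN6 := half_pow_div_factorial_le_choose (n := N) (k := 6) (by omega)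
  rw [← Nat.cast_le (α := ℝ)]
  push_cast
  set F : ℝ := ((6 : ℕ).factorial : ℝ)
  have hF : 0 < F := by positivity
  have hy2 : 64 * K * 96 ^ 6 ≤ y ^ 2 := by nlinarith
  calc 2 * ((n.choose 9 : ℝ) * K) * M.choose 6 ≤ 2 * (y ^ 27 * K) * (M ^ 6 / F) := by
        gcongr
    _ = M * (2 * K * y ^ 27 * M ^ 5 / F) := by ring
    _ ≤ M * (2 * K * y ^ 27 * (2 * y ^ 5) ^ 5 / F) := by gcongr
    _ = M * ((64 * K * 96 ^ 6) * y ^ 52 / 96 ^ 6 / F) := by ring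
    _ ≤ M * (y ^ 2 * y ^ 52 / 96 ^ 6 / F) := by gcongr
    _ = M * ((y ^ 9 / 48 / 2) ^ 6 / F) := by ring
    _ ≤ M * ((N / 2) ^ 6 / F) := by gcongr
    _ ≤ M * N.choose 6 := by gcongr

theorem f3_96_lower : ∃ c : ℝ, 0 < c ∧ ∃ N : ℕ, ∀ n : ℕ, N ≤ n →
    c * (n : ℝ) ^ ((5 : ℝ) / 3) ≤ (extremalF 3 n 9 6 : ℝ) := by
  set A : ℕ := 64 * (Nat.choose 9 3).choose 6 * 96 ^ 6
  refine ⟨1 / 2, by norm_num, A ^ 3, fun n hn => ?_⟩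
  set y : ℝ := (n : ℝ) ^ ((1 : ℝ) / 3)
  have hy0 : 0 ≤ y := by positivity
  have hny : (n : ℝ) = y ^ 3 := by
    rw [← Real.rpow_natCast, ← Real.rpow_mul (Nat.cast_nonneg n)]; norm_num
  have hn5 : (n : ℝ) ^ ((5 : ℝ) / 3) = y ^ 5 := by
    rw [← Real.rpow_natCast, ← Real.rpow_mul (Nat.cast_nonneg n)]; norm_num
  have hyA : (A : ℝ) ≤ y :=
    le_of_pow_le_pow_left₀ three_ne_zero hy0 (by rw [← hny]; exact_mod_cast hn)
  have hA : (96 : ℝ) ≤ A := by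
    have hK : 1 ≤ (Nat.choose 9 3).choose 6 := Nat.choose_pos (by decide)
    have : 96 ≤ A := le_trans (by norm_num) (Nat.mul_le_mul_right _ (Nat.mul_le_mul_left 64 hK))
    exact_mod_cast this
  set M := ⌈y ^ 5⌉₊
  have hy5 : y ≤ y ^ 5 := le_self_pow₀ (by linarith) (by norm_num)
  have hM : (M : ℝ) ≤ 2 * y ^ 5 := by linarith [Nat.ceil_lt_add_one (pow_nonneg hy0 5)]
  obtain ⟨hMN, hcond⟩ := deletion_condition_f3_96 hny hM (by exact_mod_cast hyA)
  have h9n : 9 ≤ n := by exact_mod_cast (show (9 : ℝ) ≤ n by nlinarith)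
  have h6M : 6 ≤ M := by exact_mod_cast (show (6 : ℝ) ≤ M by linarith [Nat.le_ceil (y ^ 5)])
  have hf : (M : ℝ) ≤ 2 * extremalF 3 n 9 6 := by
    exact_mod_cast le_two_mul_extremalF (by norm_num) h9n h6M hMN hcond
  rw [hn5]
  linarith [Nat.le_ceil (y ^ 5)]
end

section
/- Let r ≥ 2, e ≥ 2, n ≥ 1 and v be integers, and suppose er − v = p(e−1) + q where p and q are integers with p ≥ 1, 1 ≤ q ≤ e−1, and p+1 ≤ r. Then f_r(n, v, e) ≤ q·binom(n, p+1)/binom(r, p+1) + (e−1−q)·binom(n, p)/binom(r, p), where the inequality is between real numbers. -/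
open Finset

/-!
Colour the edges greedily with `e - 1` colours, the first `q` of which must form partial
Steiner systems with pairwise intersections `≤ p` and the others with intersections `< p`.
If a new edge `A` fits no colour, pick in each colour `i` an edge `Bᵢ` meeting `A` in at least
`tᵢ` vertices (`tᵢ = p + 1` or `p`); then `A, B₀, …, B_{e-2}` are `e` edges spanning at most
`r + ∑ (r - tᵢ) = e r - p (e - 1) - q = v` vertices, which `G_r(v,e)`-freeness forbids.
A colour class whose members meet in fewer than `s` vertices has pairwise disjoint
`s`-shadows, so it has at most `C(n,s) / C(r,s)` edges.
-/

lemma Finset.sum_range_ite_lt {M : Type*} [AddCommMonoid M] {q m : ℕ} (hqm : q ≤ m) (a b : M) :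
    ∑ i ∈ range m, (if i < q then a else b) = q • a + (m - q) • b := by
  rw [← sum_range_add_sum_Ico _ hqm,
    sum_congr rfl fun i hi => if_pos (mem_range.1 hi),
    sum_congr rfl fun i hi => if_neg (not_lt.2 (mem_Ico.1 hi).1)]
  simp

variable {V : Type*} [DecidableEq V]

theorem card_mul_choose_le_of_card_inter_lt [Fintype V] {C : Finset (Finset V)} {r s : ℕ}
    (hC : ∀ A ∈ C, A.card = r) (hinter : ∀ A ∈ C, ∀ B ∈ C, A ≠ B → (A ∩ B).card < s) :
    C.card * r.choose s ≤ (Fintype.card V).choose s := by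
  have hdisj : (C : Set (Finset V)).PairwiseDisjoint (powersetCard s) := by
    intro A hA B hB hAB
    refine disjoint_left.2 fun U hUA hUB => ?_
    rw [mem_powersetCard] at hUA hUB
    have := card_le_card (subset_inter hUA.1 hUB.1)
    have := hinter A hA B hB hAB
    omega
  calc C.card * r.choose s = ∑ A ∈ C, (A.powersetCard s).card := by
        rw [sum_congr rfl fun A hA => by rw [card_powersetCard, hC A hA], sum_const, smul_eq_mul]
    _ = (C.biUnion (powersetCard s)).card := (card_biUnion hdisj).symm
    _ ≤ (univ.powersetCard s).card :=
        card_le_card <| biUnion_subset.2 fun A _ => powersetCard_mono (subset_univ A)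
    _ = (Fintype.card V).choose s := by rw [card_powersetCard, card_univ]

lemma card_biUnion_insert_image_le (A : Finset V) (B : ℕ → Finset V) (k : ℕ) :
    ((insert A ((range k).image B)).biUnion id).card ≤
      A.card + ∑ i ∈ range k, (B i \ A).card := by
  calc ((insert A ((range k).image B)).biUnion id).card
      ≤ (A ∪ (range k).biUnion fun i => B i \ A).card := by
        refine card_le_card fun x hx => ?_
        by_cases hxA : x ∈ A
        · exact mem_union_left _ hxA
        · simp only [mem_biUnion, mem_insert, mem_image, id] at hx
          obtain ⟨_, rfl | ⟨i, hi, rfl⟩, hx⟩ := hx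
          · exact absurd hx hxA
          · exact mem_union_right _ (mem_biUnion.2 ⟨i, hi, mem_sdiff.2 ⟨hx, hxA⟩⟩)
    _ ≤ A.card + ∑ i ∈ range k, (B i \ A).card :=
        (card_union_le _ _).trans (Nat.add_le_add_left card_biUnion_le _)

lemma GFree.mono {H H' : Finset (Finset V)} {v e : ℕ} (h : GFree H v e) (hsub : H' ⊆ H) :
    GFree H' v e :=
  fun S hS => h S (hS.trans hsub)

section Coloring

variable {r v k : ℕ} (t : ℕ → ℕ)

lemma exists_color_of_gFree {s : Finset (Finset V)} {A : Finset V} (hA : A ∉ s)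
    (hr : ∀ B ∈ insert A s, B.card = r) (hfree : GFree (insert A s) v (k + 1))
    (hspan : r + ∑ i ∈ range k, (r - t i) ≤ v) (c : Finset V → ℕ) :
    ∃ i < k, ∀ B ∈ s, c B = i → (A ∩ B).card < t i := by
  by_contra! hconf
  choose! B hBs hBc hBt using hconf
  have hBinj : Set.InjOn B (range k) := fun i hi j hj hij => by
    rw [← hBc i (mem_range.1 hi), ← hBc j (mem_range.1 hj), hij]
  have hAT : A ∉ (range k).image B := fun h => by
    obtain ⟨i, hi, rfl⟩ := mem_image.1 h
    exact hA (hBs i (mem_range.1 hi))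
  have hsub : insert A ((range k).image B) ⊆ insert A s :=
    insert_subset_insert A (image_subset_iff.2 fun i hi => hBs i (mem_range.1 hi))
  have hlarge := hfree _ hsub (by rw [card_insert_of_notMem hAT, card_image_of_injOn hBinj,
    card_range])
  have hsmall : ∀ i ∈ range k, (B i \ A).card ≤ r - t i := fun i hi => by
    have := hBt i (mem_range.1 hi)
    rw [card_sdiff, hr _ (mem_insert_of_mem (hBs i (mem_range.1 hi)))]
    omega
  have hspan_le := (card_biUnion_insert_image_le A B k).trans
    (Nat.add_le_add (hr A (mem_insert_self A s)).le (sum_le_sum hsmall))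
  omega

lemma exists_coloring_of_gFree (hspan : r + ∑ i ∈ range k, (r - t i) ≤ v)
    (H : Finset (Finset V)) (hr : ∀ A ∈ H, A.card = r) (hfree : GFree H v (k + 1)) :
    ∃ c : Finset V → ℕ, (∀ A ∈ H, c A < k) ∧
      ∀ A ∈ H, ∀ B ∈ H, A ≠ B → c A = c B → (A ∩ B).card < t (c A) := by
  induction H using Finset.induction_on with
  | empty => exact ⟨fun _ => 0, by simp, by simp⟩
  | @insert A s hA ih =>
    obtain ⟨c, hc_lt, hc_inter⟩ := ih (fun B hB => hr B (mem_insert_of_mem hB))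
      (hfree.mono (subset_insert A s))
    obtain ⟨i, hi, hAi⟩ := exists_color_of_gFree t hA hr hfree hspan c
    have hupd : ∀ B ∈ s, Function.update c A i B = c B := fun B hB =>
      Function.update_of_ne (ne_of_mem_of_not_mem hB hA) _ _
    refine ⟨Function.update c A i, fun B hB => ?_, fun B hB B' hB' hne hcol => ?_⟩
    · rcases mem_insert.1 hB with rfl | hBs
      · simpa using hi
      · simpa [hupd B hBs] using hc_lt B hBs
    · rcases mem_insert.1 hB with rfl | hBs
      · rcases mem_insert.1 hB' with rfl | hB's
        · exact absurd rfl hne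
        · simp only [Function.update_self, hupd B' hB's] at hcol ⊢
          exact hAi B' hB's hcol.symm
      · rcases mem_insert.1 hB' with rfl | hB's
        · simp only [Function.update_self, hupd B hBs] at hcol ⊢
          rw [inter_comm, hcol]
          exact hAi B hBs hcol
        · simp only [hupd B hBs, hupd B' hB's] at hcol ⊢
          exact hc_inter B hBs B' hB's hne hcol

end Coloring

theorem card_le_sum_choose_div_choose [Fintype V] {H : Finset (Finset V)} {r k : ℕ}
    {t : ℕ → ℕ} (htr : ∀ i < k, t i ≤ r) (hr : ∀ A ∈ H, A.card = r) (c : Finset V → ℕ)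
    (hc_lt : ∀ A ∈ H, c A < k)
    (hc_inter : ∀ A ∈ H, ∀ B ∈ H, A ≠ B → c A = c B → (A ∩ B).card < t (c A)) :
    (H.card : ℝ) ≤ ∑ i ∈ range k, ((Fintype.card V).choose (t i) : ℝ) / r.choose (t i) := by
  rw [card_eq_sum_card_fiberwise fun A hA => mem_range.2 (hc_lt A hA), Nat.cast_sum]
  refine sum_le_sum fun i hi => ?_
  have hclass := card_mul_choose_le_of_card_inter_lt (C := H.filter (c · = i))
    (fun A hA => hr A (mem_filter.1 hA).1) fun A hA B hB hne => by
      rw [mem_filter] at hA hB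
      simpa [hA.2] using hc_inter A hA.1 B hB.1 hne (hA.2.trans hB.2.symm)
  rw [le_div_iff₀ (by exact_mod_cast Nat.choose_pos (htr i (mem_range.1 hi)))]
  exact_mod_cast hclass

lemma exists_card_eq_extremalF {r n v e : ℕ} (he : e ≠ 0) :
    ∃ H : Finset (Finset (Fin n)),
      (∀ A ∈ H, A.card = r) ∧ GFree H v e ∧ H.card = extremalF r n v e := by
  refine Nat.sSup_mem (s := {m | ∃ H : Finset (Finset (Fin n)),
      (∀ A ∈ H, A.card = r) ∧ GFree H v e ∧ H.card = m})
    ⟨0, ∅, by simp, fun S hS hSe => ?_, rfl⟩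
    ⟨Fintype.card (Finset (Fin n)), by rintro m ⟨H, -, -, rfl⟩; exact card_le_univ H⟩
  rw [subset_empty.1 hS, card_empty] at hSe
  exact absurd hSe.symm he

theorem general_upper_bound_general (r e n v p q : ℕ) (he : 2 ≤ e)
    (hq2 : q ≤ e - 1) (hpr : p + 1 ≤ r)
    (hsum : e * r = v + p * (e - 1) + q) :
    (extremalF r n v e : ℝ) ≤
      (q : ℝ) * (n.choose (p + 1) : ℝ) / (r.choose (p + 1) : ℝ) +
        ((e - 1 - q : ℕ) : ℝ) * (n.choose p : ℝ) / (r.choose p : ℝ) := by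
  set t : ℕ → ℕ := fun i => if i < q then p + 1 else p
  have hspan : r + ∑ i ∈ range (e - 1), (r - t i) ≤ v := by
    simp only [t, apply_ite (r - ·), sum_range_ite_lt hq2, smul_eq_mul]
    zify [hpr, hq2, (by omega : p ≤ r), (by omega : 1 ≤ e)] at hsum ⊢
    linarith
  obtain ⟨H, hH, hfree, hcard⟩ := exists_card_eq_extremalF (r := r) (n := n) (v := v)
    (by omega : e ≠ 0)
  obtain ⟨c, hc_lt, hc_inter⟩ := exists_coloring_of_gFree t hspan H hH
    (by rwa [Nat.sub_add_cancel (by omega : 1 ≤ e)])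
  have hbound := card_le_sum_choose_div_choose (fun i _ => by simp only [t]; split_ifs <;> omega)
    hH c hc_lt hc_inter
  rw [← hcard]
  simp only [t, Fintype.card_fin, apply_ite (fun s : ℕ => (n.choose s : ℝ) / r.choose s),
    sum_range_ite_lt hq2, nsmul_eq_mul] at hbound
  simpa only [mul_div_assoc] using hbound

theorem general_upper_bound (r e n v p q : ℕ) (hr : 2 ≤ r) (he : 2 ≤ e) (hn : 1 ≤ n)
    (hp : 1 ≤ p) (hq1 : 1 ≤ q) (hq2 : q ≤ e - 1) (hpr : p + 1 ≤ r)
    (hsum : e * r = v + p * (e - 1) + q) :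
    (extremalF r n v e : ℝ) ≤
      (q : ℝ) * (n.choose (p + 1) : ℝ) / (r.choose (p + 1) : ℝ) +
        ((e - 1 - q : ℕ) : ℝ) * (n.choose p : ℝ) / (r.choose p : ℝ) :=
  general_upper_bound_general r e n v p q he hq2 hpr hsum
end

section
/- Let r ≥ 3 and let H be an r-uniform r-partite linear hypergraph. Then H is G_r(3r−3, 3)-free if and only if H contains no rainbow 3-cycles. -/
open Finset

/-- `H` (an `r`-uniform `r`-partite hypergraph with parts given by `part`) contains a rainbow
cycle of length `k`: `k` distinct vertices and `k` distinct edges, with `vᵢ, vᵢ₊₁ ∈ Aᵢ`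
(cyclically), and the `k` vertices lying in `k` distinct vertex parts. -/
def HasRainbowCycle {V : Type*} {r : ℕ} (H : Finset (Finset V)) (part : V → Fin r)
    (k : ℕ) : Prop :=
  ∃ (v : Fin k → V) (A : Fin k → Finset V),
    Function.Injective v ∧ Function.Injective A ∧
    (∀ i, A i ∈ H) ∧
    (∀ i : Fin k, v i ∈ A i ∧ v (finRotate k i) ∈ A i) ∧
    Function.Injective (fun i => part (v i))

/-!
For three `r`-sets, `|A ∪ B ∪ C| = 3r - |A ∩ B| - |(A ∪ B) ∩ C|`. A 3-cycle through `A, B, C`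
puts one of its vertices into `A ∩ B` and two into `(A ∪ B) ∩ C`, so the union has at most
`3r - 3` vertices. Conversely, when pairwise intersections have at most one vertex,
`|A ∪ B ∪ C| ≤ 3r - 3` forces `A ∩ C` and `B ∩ C` to be disjoint singletons and `A ∩ B` to be a
singleton outside `C`, which gives a 3-cycle. Any two vertices of a 3-cycle share an edge, and an
edge meets each part once, so every 3-cycle is rainbow.
-/

section Triangle

variable {V : Type*} [DecidableEq V]

theorem card_union_union_add_card_inter_add_card_union_inter (A B C : Finset V) :
    #(A ∪ B ∪ C) + #(A ∩ B) + #((A ∪ B) ∩ C) = #A + #B + #C := by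
  have hAB := card_union_add_card_inter A B
  have hABC := card_union_add_card_inter (A ∪ B) C
  omega

/-- The sets `A, B, C` are the edges of a cycle `x, A, y, B, z, C, x` of length three. -/
def IsTriangle (A B C : Finset V) : Prop :=
  ∃ x y z, x ≠ y ∧ y ≠ z ∧ z ≠ x ∧ y ∈ A ∩ B ∧ z ∈ B ∩ C ∧ x ∈ C ∩ A

theorem IsTriangle.card_union_union_add_three_le {A B C : Finset V} (h : IsTriangle A B C) :
    #(A ∪ B ∪ C) + 3 ≤ #A + #B + #C := by
  obtain ⟨x, y, z, -, -, hzx, hy, hz, hx⟩ := h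
  have hAB : 1 ≤ #(A ∩ B) := card_pos.mpr ⟨y, hy⟩
  have hC : 2 ≤ #((A ∪ B) ∩ C) := by
    rw [mem_inter] at hz hx
    calc 2 = #{z, x} := (card_pair hzx).symm
      _ ≤ #((A ∪ B) ∩ C) := card_le_card <| by
        simp only [insert_subset_iff, singleton_subset_iff, mem_inter, mem_union]
        tauto
  have := card_union_union_add_card_inter_add_card_union_inter A B C
  omega

theorem isTriangle_of_card_union_union_add_three_le {A B C : Finset V}
    (hAB : #(A ∩ B) ≤ 1) (hAC : #(A ∩ C) ≤ 1) (hBC : #(B ∩ C) ≤ 1)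
    (h : #(A ∪ B ∪ C) + 3 ≤ #A + #B + #C) : IsTriangle A B C := by
  have hsum := card_union_union_add_card_inter_add_card_union_inter A B C
  rw [union_inter_distrib_right] at hsum
  have hunion := card_union_le (A ∩ C) (B ∩ C)
  obtain ⟨y, hy⟩ := card_pos.mp (show 0 < #(A ∩ B) by omega)
  obtain ⟨x, hx⟩ := card_pos.mp (show 0 < #(A ∩ C) by omega)
  obtain ⟨z, hz⟩ := card_pos.mp (show 0 < #(B ∩ C) by omega)
  have hdisj : Disjoint (A ∩ C) (B ∩ C) := card_union_eq_card_add_card.mp (by omega)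
  have hyC : y ∉ C := fun hyC =>
    disjoint_left.mp hdisj (mem_inter.mpr ⟨(mem_inter.mp hy).1, hyC⟩)
      (mem_inter.mpr ⟨(mem_inter.mp hy).2, hyC⟩)
  refine ⟨x, y, z, ?_, ?_, ?_, hy, hz, inter_comm A C ▸ hx⟩
  · rintro rfl; exact hyC (mem_inter.mp hx).2
  · rintro rfl; exact hyC (mem_inter.mp hz).2
  · exact fun hzx => disjoint_left.mp hdisj hx (hzx ▸ hz)

theorem isTriangle_iff_card_union_union_add_three_le {A B C : Finset V}
    (hAB : #(A ∩ B) ≤ 1) (hAC : #(A ∩ C) ≤ 1) (hBC : #(B ∩ C) ≤ 1) :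
    IsTriangle A B C ↔ #(A ∪ B ∪ C) + 3 ≤ #A + #B + #C :=
  ⟨IsTriangle.card_union_union_add_three_le,
    isTriangle_of_card_union_union_add_three_le hAB hAC hBC⟩

end Triangle

theorem vec_three_injective {α : Type*} {a b c : α} (hab : a ≠ b) (hbc : b ≠ c)
    (hca : c ≠ a) : Function.Injective ![a, b, c] := by
  intro i j h
  fin_cases i <;> fin_cases j <;> simp_all [eq_comm]

theorem card_eq_card_of_card_filter_eq_one {V ι : Type*} [Fintype ι] [DecidableEq ι]
    {part : V → ι} {A : Finset V} (h : ∀ i, #(A.filter fun x => part x = i) = 1) :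
    #A = Fintype.card ι := by
  rw [card_eq_sum_card_fiberwise fun x _ => mem_univ (part x)]
  simp [h]

theorem injOn_of_card_filter_eq_one {V ι : Type*} [DecidableEq ι] {part : V → ι}
    {A : Finset V} (h : ∀ i, #(A.filter fun x => part x = i) = 1) : Set.InjOn part A := by
  intro x hx y hy hxy
  rw [mem_coe] at hx hy
  exact card_le_one.mp (h (part y)).le x (by simp [hx, hxy]) y (by simp [hy])

section Hypergraph

variable {V : Type*} [DecidableEq V]

theorem gFree_three_iff {H : Finset (Finset V)} {v : ℕ} :
    GFree H v 3 ↔ ∀ A ∈ H, ∀ B ∈ H, ∀ C ∈ H, A ≠ B → A ≠ C → B ≠ C →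
      v + 1 ≤ #(A ∪ B ∪ C) := by
  constructor
  · intro hG A hA B hB C hC hAB hAC hBC
    have hS : ({A, B, C} : Finset (Finset V)) ⊆ H := by
      simp only [insert_subset_iff, singleton_subset_iff]
      exact ⟨hA, hB, hC⟩
    simpa [union_assoc] using hG _ hS (card_eq_three.mpr ⟨A, B, C, hAB, hAC, hBC, rfl⟩)
  · rintro hG S hS hS3
    obtain ⟨A, B, C, hAB, hAC, hBC, rfl⟩ := card_eq_three.mp hS3
    simp only [insert_subset_iff, singleton_subset_iff] at hS
    simpa [union_assoc] using hG A hS.1 B hS.2.1 C hS.2.2 hAB hAC hBC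

theorem hasRainbowCycle_three_iff {r : ℕ} {H : Finset (Finset V)} {part : V → Fin r}
    (hinj : ∀ A ∈ H, Set.InjOn part A) :
    HasRainbowCycle H part 3 ↔
      ∃ A ∈ H, ∃ B ∈ H, ∃ C ∈ H, A ≠ B ∧ A ≠ C ∧ B ≠ C ∧ IsTriangle A B C := by
  have hrot : ∀ i : Fin 3, finRotate 3 i = ![1, 2, 0] i := by decide
  constructor
  · rintro ⟨v, A, hv, hA, hAH, hcyc, -⟩
    simp only [hrot, Fin.forall_fin_succ, IsEmpty.forall_iff] at hcyc
    refine ⟨A 0, hAH 0, A 1, hAH 1, A 2, hAH 2, hA.ne (by decide), hA.ne (by decide),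
      hA.ne (by decide), v 0, v 1, v 2, hv.ne (by decide), hv.ne (by decide), hv.ne (by decide),
      ?_, ?_, ?_⟩ <;> simp_all
  · rintro ⟨A, hA, B, hB, C, hC, hAB, hAC, hBC, x, y, z, hxy, hyz, hzx, hy, hz, hx⟩
    rw [mem_inter] at hx hy hz
    refine ⟨![x, y, z], ![A, B, C], ?_, ?_, ?_, ?_, ?_⟩
    · exact vec_three_injective hxy hyz hzx
    · exact vec_three_injective hAB hBC hAC.symm
    · intro i; fin_cases i <;> assumption
    · intro i; rw [hrot]; fin_cases i <;> simp_all
    · convert vec_three_injective (a := part x) (b := part y) (c := part z) ?_ ?_ ?_ using 1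
      · ext i; fin_cases i <;> rfl
      · exact fun h => hxy (hinj A hA hx.2 hy.1 h)
      · exact fun h => hyz (hinj B hB hy.2 hz.1 h)
      · exact fun h => hzx (hinj C hC hz.2 hx.1 h)

end Hypergraph

theorem gfree_iff_no_rainbow_3cycle {V : Type*} [DecidableEq V] (r : ℕ) (hr : 3 ≤ r)
    (H : Finset (Finset V)) (part : V → Fin r)
    (hpart : ∀ A ∈ H, ∀ i : Fin r, (A.filter fun x => part x = i).card = 1)
    (hlin : ∀ A ∈ H, ∀ B ∈ H, A ≠ B → (A ∩ B).card ≤ 1) :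
    GFree H (3 * r - 3) 3 ↔ ¬ HasRainbowCycle H part 3 := by
  have hcard (A) (hA : A ∈ H) : #A = r := by
    simpa using card_eq_card_of_card_filter_eq_one (hpart A hA)
  have hinj (A) (hA : A ∈ H) : Set.InjOn part A := injOn_of_card_filter_eq_one (hpart A hA)
  rw [gFree_three_iff, hasRainbowCycle_three_iff hinj]
  simp only [not_exists, not_and]
  refine forall₂_congr fun A hA => forall₂_congr fun B hB => forall₂_congr fun C hC => ?_
  refine imp_congr_right fun hAB => imp_congr_right fun hAC => imp_congr_right fun hBC => ?_
  rw [isTriangle_iff_card_union_union_add_three_le (hlin A hA B hB hAB) (hlin A hA C hC hAC)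
    (hlin B hB C hC hBC), hcard A hA, hcard B hB, hcard C hC]
  omega
end

section
/- Let r ≥ 3 and let H be an r-uniform r-partite linear hypergraph. If H is G_r(3r−3, 3)-free, then H is also G_r(5r−7, 5)-free. -/
open Finset

/-!
Call `excess T = ∑_{A ∈ T} |A| - |⋃ T|` the excess of a family of edges; it is the sum over
the vertices `v` of `deg_T v - 1`. In an `r`-uniform hypergraph, being `G_r(3r-3, 3)`-free says
exactly that every triple of edges has excess at most `2`. If `D` is the set of edges of a
5-set `S` through a vertex, then summing `(|T ∩ D| - 1)⁺` over the ten triples `T ⊆ S` gives at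
least `3 (|D| - 1)`. Summing over the vertices, `3 · excess S ≤ ∑_T excess T ≤ 20`, so
`excess S ≤ 6` and `|⋃ S| ≥ 5r - 6`.
-/

section Excess

variable {α : Type*} [DecidableEq α]

lemma three_mul_card_sub_one_le_sum_card_inter_sub_one {S D : Finset α} (hS : #S = 5)
    (hDS : D ⊆ S) :
    3 * (#D - 1) ≤ ∑ T ∈ S.powersetCard 3, (#(T ∩ D) - 1) := by
  obtain hD | hD2 | hD : #D < 2 ∨ #D = 2 ∨ 3 ≤ #D := by omega
  · simp [Nat.sub_eq_zero_of_le (Nat.le_of_lt_succ hD)]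
  · have hcontain : #{T ∈ S.powersetCard 3 | D ⊆ T} = 3 := by
      rw [card_filter_powersetCard_subset D S 3 hDS (by omega), hS, hD2]; rfl
    calc 3 * (#D - 1) = ∑ T ∈ S.powersetCard 3 with D ⊆ T, 1 := by
          rw [← card_eq_sum_ones, hcontain, hD2]
      _ ≤ ∑ T ∈ S.powersetCard 3 with D ⊆ T, (#(T ∩ D) - 1) := by
          refine sum_le_sum fun T hT => ?_
          rw [inter_eq_right.2 (mem_filter.1 hT).2, hD2]
      _ ≤ ∑ T ∈ S.powersetCard 3, (#(T ∩ D) - 1) :=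
          sum_le_sum_of_subset (filter_subset _ _)
  · -- Each edge of `S` lies in `C(4,2) = 6` of the ten triples.
    have hincidences : ∑ T ∈ S.powersetCard 3, #(D ∩ T) = #D * 6 := by
      refine sum_card_inter fun A hA => ?_
      have := card_filter_powersetCard_subset {A} S 3 (singleton_subset_iff.2 (hDS hA))
        (by simp)
      simp only [singleton_subset_iff, card_singleton, hS] at this
      exact this
    have htriples : #(S.powersetCard 3) = 10 := by rw [card_powersetCard, hS]; rfl
    have hdrop : ∑ T ∈ S.powersetCard 3, #(D ∩ T) ≤
        ∑ T ∈ S.powersetCard 3, (#(T ∩ D) - 1) + 10 := by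
      rw [← htriples, card_eq_sum_ones, ← sum_add_distrib]
      exact sum_le_sum fun T _ => by rw [inter_comm]; omega
    omega

def excess (T : Finset (Finset α)) : ℕ :=
  ∑ v ∈ T.biUnion id, (#{A ∈ T | v ∈ A} - 1)

lemma excess_eq_sum_of_biUnion_subset {T : Finset (Finset α)} {U : Finset α}
    (hU : T.biUnion id ⊆ U) : excess T = ∑ v ∈ U, (#{A ∈ T | v ∈ A} - 1) := by
  refine sum_subset hU fun v _ hv => ?_
  have : {A ∈ T | v ∈ A} = ∅ :=
    filter_eq_empty_iff.2 fun A hA hvA => hv (mem_biUnion.2 ⟨A, hA, hvA⟩)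
  rw [this, card_empty, zero_tsub]

lemma card_biUnion_add_excess (T : Finset (Finset α)) :
    #(T.biUnion id) + excess T = ∑ A ∈ T, #A := by
  have hdouble : ∑ v ∈ T.biUnion id, #{A ∈ T | v ∈ A} = ∑ A ∈ T, #A := by
    refine (sum_card_bipartiteAbove_eq_sum_card_bipartiteBelow (r := fun v A => v ∈ A)).trans
      (sum_congr rfl fun A hA => ?_)
    exact congrArg card (filter_mem_eq_inter.trans (inter_eq_right.2 (subset_biUnion_of_mem id hA)))
  rw [← hdouble, excess, card_eq_sum_ones, ← sum_add_distrib]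
  refine sum_congr rfl fun v hv => ?_
  obtain ⟨A, hA, hvA⟩ := mem_biUnion.1 hv
  have : 0 < #{A ∈ T | v ∈ A} := card_pos.2 ⟨A, mem_filter.2 ⟨hA, hvA⟩⟩
  omega

lemma three_mul_excess_le_sum_excess_triples {S : Finset (Finset α)} (hS : #S = 5) :
    3 * excess S ≤ ∑ T ∈ S.powersetCard 3, excess T := by
  have hvertex : ∀ T ∈ S.powersetCard 3,
      excess T = ∑ v ∈ S.biUnion id, (#{A ∈ T | v ∈ A} - 1) := fun T hT =>
    excess_eq_sum_of_biUnion_subset (biUnion_subset_biUnion_of_subset_left id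
      (mem_powersetCard.1 hT).1)
  rw [sum_congr rfl hvertex, sum_comm, excess, mul_sum]
  refine sum_le_sum fun v _ => ?_
  calc 3 * (#{A ∈ S | v ∈ A} - 1)
      ≤ ∑ T ∈ S.powersetCard 3, (#(T ∩ {A ∈ S | v ∈ A}) - 1) :=
        three_mul_card_sub_one_le_sum_card_inter_sub_one hS (filter_subset _ _)
    _ = ∑ T ∈ S.powersetCard 3, (#{A ∈ T | v ∈ A} - 1) := by
        refine sum_congr rfl fun T hT => ?_
        rw [inter_filter, inter_eq_left.2 (mem_powersetCard.1 hT).1]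

lemma card_biUnion_add_excess_of_forall_card_eq {T : Finset (Finset α)} {r : ℕ}
    (hT : ∀ A ∈ T, #A = r) : #(T.biUnion id) + excess T = #T * r := by
  rw [card_biUnion_add_excess, sum_const_nat hT]

end Excess

lemma card_eq_card_of_forall_card_filter_eq_one {α ι : Type*} [Fintype ι] [DecidableEq ι]
    {A : Finset α} {part : α → ι} (hA : ∀ i, #{x ∈ A | part x = i} = 1) :
    #A = Fintype.card ι := by
  rw [card_eq_sum_card_fiberwise fun x _ => mem_univ (part x)]
  simp [hA]

theorem gfree3_implies_gfree5_general {V : Type*} [DecidableEq V] (r : ℕ) (hr : 3 ≤ r)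
    (H : Finset (Finset V)) (part : V → Fin r)
    (hpart : ∀ A ∈ H, ∀ i : Fin r, (A.filter fun x => part x = i).card = 1)
    (hfree : GFree H (3 * r - 3) 3) :
    GFree H (5 * r - 7) 5 := by
  have huniform : ∀ A ∈ H, #A = r := fun A hA => by
    simpa using card_eq_card_of_forall_card_filter_eq_one (hpart A hA)
  intro S hSH hS
  have htriple : ∀ T ∈ S.powersetCard 3, excess T ≤ 2 := by
    intro T hT
    obtain ⟨hTS, hT⟩ := mem_powersetCard.1 hT
    have hTH := hTS.trans hSH
    have hspan := hfree T hTH hT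
    have hcount := card_biUnion_add_excess_of_forall_card_eq fun A hA => huniform A (hTH hA)
    rw [hT] at hcount
    omega
  have hexcess : 3 * excess S ≤ 20 :=
    calc 3 * excess S ≤ ∑ T ∈ S.powersetCard 3, excess T :=
          three_mul_excess_le_sum_excess_triples hS
      _ ≤ ∑ _T ∈ S.powersetCard 3, 2 := sum_le_sum htriple
      _ = 20 := by rw [sum_const, card_powersetCard, hS]; rfl
  have hcount := card_biUnion_add_excess_of_forall_card_eq fun A hA => huniform A (hSH hA)
  rw [hS] at hcount
  omega

theorem gfree3_implies_gfree5 {V : Type*} [DecidableEq V] (r : ℕ) (hr : 3 ≤ r)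
    (H : Finset (Finset V)) (part : V → Fin r)
    (hpart : ∀ A ∈ H, ∀ i : Fin r, (A.filter fun x => part x = i).card = 1)
    (hlin : ∀ A ∈ H, ∀ B ∈ H, A ≠ B → (A ∩ B).card ≤ 1)
    (hfree : GFree H (3 * r - 3) 3) :
    GFree H (5 * r - 7) 5 :=
  gfree3_implies_gfree5_general r hr H part hpart hfree
end

section
/- Let r ≥ 3 and let H be an r-uniform r-partite linear hypergraph containing no rainbow cycles of length three or four. Then H is G_r(7r−11, 7)-free. -/
/-!
Put `excess S = ∑ A ∈ S, #A - #(⋃ S)`; for seven edges of size `r` the claim is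
`excess S ≤ 10`. The edges form a linear family in which, by the absence of rainbow triangles, any
three pairwise intersecting edges share a vertex, and in which, by the absence of rainbow 4-cycles
as well, two disjoint edges have at most three common neighbours.

If every edge meets at most three others, double counting over the vertices of a linear family
gives `2 * excess S ≤ ∑ A ∈ S, #(nbrs S A) ≤ 21`. Otherwise some edge `A` has a set `N` of
at least four neighbours. The star `A ∪ ⋃ N` has excess `#N`, since two neighbours of `A` can
only meet inside `A`. Each of the at most two remaining edges is disjoint from `A`, so it meets
`⋃ N` only in its at most three common neighbours with `A`, and the two meet each other at most
once.
The one configuration exceeding the bound, where the two remaining edges meet outside `⋃ N`,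
forces their common neighbourhoods with `A` to be disjoint, by the triangle property.
-/

open Finset

namespace EdgeFamily

variable {V : Type*} [DecidableEq V] {S T N : Finset (Finset V)} {A B C Z : Finset V}

def IsLinear (S : Finset (Finset V)) : Prop :=
  ∀ A ∈ S, ∀ B ∈ S, A ≠ B → #(A ∩ B) ≤ 1

def IsTriangleHelly (S : Finset (Finset V)) : Prop :=
  ∀ A ∈ S, ∀ B ∈ S, ∀ C ∈ S,
    ¬Disjoint A B → ¬Disjoint B C → ¬Disjoint A C → (A ∩ B ∩ C).Nonempty

def DisjointCodegreeLE (S : Finset (Finset V)) (k : ℕ) : Prop :=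
  ∀ A ∈ S, ∀ Z ∈ S, Disjoint A Z → #{C ∈ S | ¬Disjoint A C ∧ ¬Disjoint Z C} ≤ k

def degree (S : Finset (Finset V)) (v : V) : ℕ := #{A ∈ S | v ∈ A}

-- The subtraction does not truncate, by `Finset.card_biUnion_le`.
def excess (S : Finset (Finset V)) : ℕ := ∑ A ∈ S, #A - #(S.biUnion id)

def nbrs (S : Finset (Finset V)) (A : Finset V) : Finset (Finset V) :=
  {B ∈ S.erase A | ¬Disjoint A B}

def far (S : Finset (Finset V)) (A : Finset V) : Finset (Finset V) :=
  {B ∈ S.erase A | Disjoint A B}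

lemma mem_nbrs : B ∈ nbrs S A ↔ B ∈ S ∧ B ≠ A ∧ ¬Disjoint A B := by
  rw [nbrs, mem_filter, mem_erase]
  tauto

lemma mem_far : B ∈ far S A ↔ B ∈ S ∧ B ≠ A ∧ Disjoint A B := by
  rw [far, mem_filter, mem_erase]
  tauto

lemma IsLinear.mono (h : IsLinear T) (hST : S ⊆ T) : IsLinear S :=
  fun A hA B hB => h A (hST hA) B (hST hB)

lemma IsTriangleHelly.mono (h : IsTriangleHelly T) (hST : S ⊆ T) : IsTriangleHelly S :=
  fun A hA B hB C hC => h A (hST hA) B (hST hB) C (hST hC)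

lemma DisjointCodegreeLE.mono {k : ℕ} (h : DisjointCodegreeLE T k) (hST : S ⊆ T) :
    DisjointCodegreeLE S k :=
  fun A hA Z hZ hAZ =>
    (card_le_card (filter_subset_filter _ hST)).trans (h A (hST hA) Z (hST hZ) hAZ)

lemma IsLinear.eq_of_mem_inter (h : IsLinear S) (hA : A ∈ S) (hB : B ∈ S) (hAB : A ≠ B)
    {x y : V} (hx : x ∈ A ∩ B) (hy : y ∈ A ∩ B) : x = y :=
  card_le_one.mp (h A hA B hB hAB) x hx y hy

lemma inter_subset_of_not_disjoint (hlin : IsLinear S) (hhelly : IsTriangleHelly S)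
    (hB : B ∈ S) (hC : C ∈ S) (hZ : Z ∈ S) (hBC : B ≠ C)
    (hZB : ¬Disjoint Z B) (hZC : ¬Disjoint Z C) : B ∩ C ⊆ Z := by
  intro x hx
  obtain ⟨y, hy⟩ :=
    hhelly Z hZ B hB C hC hZB (not_disjoint_iff_nonempty_inter.mpr ⟨x, hx⟩) hZC
  rw [inter_assoc, mem_inter] at hy
  exact hlin.eq_of_mem_inter hB hC hBC hy.2 hx ▸ hy.1

lemma excess_union (h : Disjoint S T) :
    excess (S ∪ T) = excess S + excess T + #(S.biUnion id ∩ T.biUnion id) := by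
  have hS : #(S.biUnion id) ≤ ∑ A ∈ S, #A := card_biUnion_le
  have hT : #(T.biUnion id) ≤ ∑ A ∈ T, #A := card_biUnion_le
  have := card_union_add_card_inter (S.biUnion id) (T.biUnion id)
  simp only [excess, sum_union h, union_biUnion]
  omega

lemma excess_singleton (A : Finset V) : excess {A} = 0 := by
  simp [excess]

lemma excess_insert (hA : A ∉ S) : excess (insert A S) = excess S + #(A ∩ S.biUnion id) := by
  rw [insert_eq, excess_union (disjoint_singleton_left.mpr hA), excess_singleton]
  simp

lemma excess_insert_le_card (hA : A ∉ N) (hmeet : ∀ B ∈ N, #(A ∩ B) ≤ 1)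
    (hpair : ∀ B ∈ N, ∀ C ∈ N, B ≠ C → B ∩ C ⊆ A) : excess (insert A N) ≤ #N := by
  induction N using Finset.induction_on with
  | empty => simp [excess_singleton]
  | insert B N hB ih =>
    have hBN : B ∉ insert A N := by
      simp only [mem_insert, not_or]
      exact ⟨fun h => hA (h ▸ mem_insert_self B N), hB⟩
    have hsub : B ∩ (insert A N).biUnion id ⊆ A ∩ B := by
      intro x hx
      simp only [mem_inter, biUnion_insert, id, mem_union, mem_biUnion] at hx
      obtain ⟨hxB, hxA | ⟨C, hC, hxC⟩⟩ := hx
      · exact mem_inter.mpr ⟨hxA, hxB⟩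
      · have hBC : B ≠ C := fun h => hB (h ▸ hC)
        exact mem_inter.mpr ⟨hpair B (mem_insert_self B N) C (mem_insert_of_mem hC) hBC
          (mem_inter.mpr ⟨hxB, hxC⟩), hxB⟩
    have hN := ih (fun h => hA (mem_insert_of_mem h)) (fun C hC => hmeet C (mem_insert_of_mem hC))
      (fun C hC D hD => hpair C (mem_insert_of_mem hC) D (mem_insert_of_mem hD))
    rw [insert_comm, excess_insert hBN, card_insert_of_notMem hB]
    have := card_le_card hsub
    have := hmeet B (mem_insert_self B N)
    omega

lemma card_inter_biUnion_le (h : ∀ B ∈ N, #(Z ∩ B) ≤ 1) :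
    #(Z ∩ N.biUnion id) ≤ #{B ∈ N | ¬Disjoint Z B} := by
  rw [inter_biUnion, card_filter]
  refine card_biUnion_le.trans (sum_le_sum fun B hB => ?_)
  by_cases hZB : Disjoint Z B
  · simp [hZB, disjoint_iff_inter_eq_empty.mp hZB]
  · simpa [hZB] using h B hB

lemma sum_sum_eq_sum_degree_mul (S : Finset (Finset V)) (f : V → ℕ) :
    ∑ A ∈ S, ∑ v ∈ A, f v = ∑ v ∈ S.biUnion id, degree S v * f v := by
  rw [sum_comm' (t' := S.biUnion id) (s' := fun v => {A ∈ S | v ∈ A})]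
  · simp [degree]
  · intro A v
    simp only [mem_filter, mem_biUnion, id]
    exact ⟨fun h => ⟨h, A, h⟩, fun h => h.1⟩

lemma excess_eq_sum_degree_sub_one (S : Finset (Finset V)) :
    excess S = ∑ v ∈ S.biUnion id, (degree S v - 1) := by
  have hpos : ∀ v ∈ S.biUnion id, 1 ≤ degree S v := by
    intro v hv
    obtain ⟨A, hA, hvA⟩ := mem_biUnion.mp hv
    exact card_pos.mpr ⟨A, mem_filter.mpr ⟨hA, hvA⟩⟩
  have hsum := sum_sum_eq_sum_degree_mul S fun _ => 1
  simp only [sum_const, smul_eq_mul, mul_one] at hsum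
  rw [excess, hsum, sum_tsub_distrib _ hpos, card_eq_sum_ones]

lemma IsLinear.card_nbrs (hlin : IsLinear S) (hA : A ∈ S) :
    #(nbrs S A) = ∑ v ∈ A, (degree S v - 1) := by
  have hnbrs : nbrs S A = A.biUnion fun v => {B ∈ S | v ∈ B}.erase A := by
    ext B
    simp only [nbrs, mem_filter, mem_erase, mem_biUnion, not_disjoint_iff]
    constructor
    · rintro ⟨⟨hBA, hB⟩, v, hvA, hvB⟩
      exact ⟨v, hvA, hBA, hB, hvB⟩
    · rintro ⟨v, hvA, hBA, hB, hvB⟩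
      exact ⟨⟨hBA, hB⟩, v, hvA, hvB⟩
  rw [hnbrs, card_biUnion]
  · exact sum_congr rfl fun v hv => by
      rw [card_erase_of_mem (mem_filter.mpr ⟨hA, hv⟩)]; rfl
  · intro v hv w hw hvw
    simp only [Function.onFun, disjoint_left, mem_erase, mem_filter]
    rintro B ⟨hBA, hB, hvB⟩ ⟨-, -, hwB⟩
    exact hvw (hlin.eq_of_mem_inter hA hB (Ne.symm hBA) (mem_inter.mpr ⟨hv, hvB⟩)
      (mem_inter.mpr ⟨hw, hwB⟩))

lemma IsLinear.two_mul_excess_le (hlin : IsLinear S) :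
    2 * excess S ≤ ∑ A ∈ S, #(nbrs S A) := by
  rw [sum_congr rfl fun A hA => hlin.card_nbrs hA, sum_sum_eq_sum_degree_mul,
    excess_eq_sum_degree_sub_one, mul_sum]
  refine sum_le_sum fun v _ => ?_
  rcases Nat.lt_or_ge (degree S v) 2 with h | h
  · simp [Nat.sub_eq_zero_of_le (Nat.le_of_lt_succ h)]
  · exact Nat.mul_le_mul_right _ h

lemma card_nbrs_add_card_far (hA : A ∈ S) : #(nbrs S A) + #(far S A) + 1 = #S := by
  have := card_filter_add_card_filter_not (s := S.erase A) (fun B => Disjoint A B)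
  rw [card_erase_of_mem hA] at this
  have := card_pos.mpr ⟨A, hA⟩
  simp only [nbrs, far]
  omega

lemma insert_nbrs_union_far (hA : A ∈ S) : insert A (nbrs S A) ∪ far S A = S := by
  rw [nbrs, far, insert_union, union_comm, filter_union_filter_not_eq, insert_erase hA]

lemma disjoint_insert_nbrs_far : Disjoint (insert A (nbrs S A)) (far S A) := by
  rw [disjoint_insert_left, nbrs, far]
  refine ⟨fun h => (mem_erase.mp (mem_filter.mp h).1).1 rfl, ?_⟩
  exact (disjoint_filter_filter_not _ _ (fun B => Disjoint A B)).symm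

lemma excess_le_card_nbrs_add (hlin : IsLinear S) (hhelly : IsTriangleHelly S) (hA : A ∈ S) :
    excess S ≤ #(nbrs S A) + excess (far S A) +
      #((nbrs S A).biUnion id ∩ (far S A).biUnion id) := by
  have hnbrs (B : Finset V) (hB : B ∈ nbrs S A) := mem_nbrs.mp hB
  have hstar : excess (insert A (nbrs S A)) ≤ #(nbrs S A) :=
    excess_insert_le_card (fun h => (hnbrs A h).2.1 rfl)
      (fun B hB => hlin A hA B (hnbrs B hB).1 (hnbrs B hB).2.1.symm)
      (fun B hB C hC hBC => inter_subset_of_not_disjoint hlin hhelly (hnbrs B hB).1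
        (hnbrs C hC).1 hA hBC (hnbrs B hB).2.2 (hnbrs C hC).2.2)
  have hAfar : Disjoint A ((far S A).biUnion id) :=
    (disjoint_biUnion_right _ _ _).mpr fun Z hZ => (mem_far.mp hZ).2.2
  have hcross : (insert A (nbrs S A)).biUnion id ∩ (far S A).biUnion id =
      (nbrs S A).biUnion id ∩ (far S A).biUnion id := by
    rw [biUnion_insert, union_inter_distrib_right, id, disjoint_iff_inter_eq_empty.mp hAfar,
      empty_union]
  calc excess S = excess (insert A (nbrs S A) ∪ far S A) := by rw [insert_nbrs_union_far hA]
    _ ≤ _ := by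
      rw [excess_union disjoint_insert_nbrs_far, hcross]
      omega

lemma card_biUnion_nbrs_inter_le (hlin : IsLinear S) (hZ : Z ∈ far S A) :
    #((nbrs S A).biUnion id ∩ Z) ≤ #{B ∈ nbrs S A | ¬Disjoint Z B} := by
  rw [inter_comm]
  refine card_inter_biUnion_le fun B hB => ?_
  by_cases hZB : Z = B
  · exact absurd (hZB ▸ (mem_far.mp hZ).2.2) (mem_nbrs.mp hB).2.2
  · exact hlin Z (mem_far.mp hZ).1 B (mem_nbrs.mp hB).1 hZB

lemma card_nbrs_meeting_far_le {k : ℕ} (hcod : DisjointCodegreeLE S k) (hA : A ∈ S)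
    (hZ : Z ∈ far S A) : #{B ∈ nbrs S A | ¬Disjoint Z B} ≤ k := by
  refine (card_le_card fun B hB => ?_).trans (hcod A hA Z (mem_far.mp hZ).1 (mem_far.mp hZ).2.2)
  rw [mem_filter] at hB ⊢
  exact ⟨(mem_nbrs.mp hB.1).1, (mem_nbrs.mp hB.1).2.2, hB.2⟩

lemma card_cross_add_card_inter_le (hlin : IsLinear S) (hhelly : IsTriangleHelly S)
    (hcod : DisjointCodegreeLE S 3) (hA : A ∈ S) {Z₁ Z₂ : Finset V} (hZ₁ : Z₁ ∈ far S A)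
    (hZ₂ : Z₂ ∈ far S A) (hne : Z₁ ≠ Z₂) (hN : #(nbrs S A) ≤ 5) :
    #((nbrs S A).biUnion id ∩ (Z₁ ∪ Z₂)) + #(Z₁ ∩ Z₂) ≤ 6 := by
  set X := (nbrs S A).biUnion id
  have hZ₁S : Z₁ ∈ S := (mem_far.mp hZ₁).1
  have hZ₂S : Z₂ ∈ S := (mem_far.mp hZ₂).1
  have hX₁ : #(X ∩ Z₁) ≤ _ := card_biUnion_nbrs_inter_le hlin hZ₁
  have hX₂ : #(X ∩ Z₂) ≤ _ := card_biUnion_nbrs_inter_le hlin hZ₂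
  have hR₁ := card_nbrs_meeting_far_le hcod hA hZ₁
  have hR₂ := card_nbrs_meeting_far_le hcod hA hZ₂
  have h12 : #((Z₁ ∩ Z₂) \ X) ≤ 1 :=
    (card_le_card sdiff_subset).trans (hlin Z₁ hZ₁S Z₂ hZ₂S hne)
  have hsplit : #(X ∩ (Z₁ ∪ Z₂)) + #(Z₁ ∩ Z₂) =
      #(X ∩ Z₁) + #(X ∩ Z₂) + #((Z₁ ∩ Z₂) \ X) := by
    have hunion := card_union_add_card_inter (X ∩ Z₁) (X ∩ Z₂)
    have hsdiff := card_inter_add_card_sdiff (Z₁ ∩ Z₂) X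
    rw [← inter_union_distrib_left, ← inter_inter_distrib_left] at hunion
    rw [inter_comm] at hsdiff
    omega
  by_cases hw : ((Z₁ ∩ Z₂) \ X).Nonempty
  · obtain ⟨w, hw⟩ := hw
    -- an edge of `nbrs S A` meeting both `Z₁` and `Z₂` would contain `w`
    have hdisj :
        Disjoint {B ∈ nbrs S A | ¬Disjoint Z₁ B} {B ∈ nbrs S A | ¬Disjoint Z₂ B} := by
      refine disjoint_left.mpr fun B hB₁ hB₂ => (mem_sdiff.mp hw).2 ?_
      rw [mem_filter] at hB₁ hB₂
      have hsub :=
        inter_subset_of_not_disjoint hlin hhelly hZ₁S hZ₂S (mem_nbrs.mp hB₁.1).1 hne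
        (disjoint_comm.not.mp hB₁.2) (disjoint_comm.not.mp hB₂.2)
      exact mem_biUnion.mpr ⟨B, hB₁.1, hsub (mem_sdiff.mp hw).1⟩
    have := card_union_of_disjoint hdisj ▸
      card_le_card (union_subset (filter_subset _ (nbrs S A)) (filter_subset _ _))
    omega
  · rw [not_nonempty_iff_eq_empty.mp hw, card_empty] at hsplit
    omega

lemma excess_far_add_card_cross_le (hlin : IsLinear S) (hhelly : IsTriangleHelly S)
    (hcod : DisjointCodegreeLE S 3) (hS : #S ≤ 7) (hA : A ∈ S) (hfar : #(far S A) ≤ 2) :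
    excess (far S A) + #((nbrs S A).biUnion id ∩ (far S A).biUnion id) ≤ 3 * #(far S A) := by
  obtain h | h | h : #(far S A) = 0 ∨ #(far S A) = 1 ∨ #(far S A) = 2 := by omega
  · simp [card_eq_zero.mp h, excess]
  · obtain ⟨Z, hfarZ⟩ := card_eq_one.mp h
    have hZ : Z ∈ far S A := hfarZ ▸ mem_singleton_self Z
    have := (card_biUnion_nbrs_inter_le hlin hZ).trans (card_nbrs_meeting_far_le hcod hA hZ)
    rw [h, hfarZ, excess_singleton, singleton_biUnion]
    simpa using this
  · obtain ⟨Z₁, Z₂, hne, hfarZ⟩ := card_eq_two.mp h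
    have := card_cross_add_card_inter_le hlin hhelly hcod hA (hfarZ ▸ by simp)
      (hfarZ ▸ by simp) hne (by have := card_nbrs_add_card_far hA; omega)
    rw [h, hfarZ, excess_insert (by simpa using hne), excess_singleton]
    simp only [biUnion_insert, singleton_biUnion, id]
    omega

theorem excess_le_ten (hlin : IsLinear S) (hhelly : IsTriangleHelly S)
    (hcod : DisjointCodegreeLE S 3) (hS : #S = 7) : excess S ≤ 10 := by
  by_cases hsparse : ∀ A ∈ S, #(nbrs S A) ≤ 3
  · have hsum : ∑ A ∈ S, #(nbrs S A) ≤ 7 * 3 := by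
      simpa [hS] using sum_le_sum hsparse
    have := hlin.two_mul_excess_le
    omega
  · push Not at hsparse
    obtain ⟨A, hA, hdense⟩ := hsparse
    have hcard := card_nbrs_add_card_far hA
    have := excess_le_card_nbrs_add hlin hhelly hA
    have := excess_far_add_card_cross_le hlin hhelly hcod hS.le hA (by omega)
    omega

end EdgeFamily

section RainbowFree

open EdgeFamily Function

variable {V : Type*} {r : ℕ} {H : Finset (Finset V)} {part : V → Fin r}
  {A B C Z : Finset V}

def IsPartite (H : Finset (Finset V)) (part : V → Fin r) : Prop :=
  ∀ A ∈ H, ∀ i : Fin r, #{x ∈ A | part x = i} = 1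

-- Pigeonhole on the pairs `(0, j)`: `p 0 = q j` for at most one `j`, and likewise for `q 0 = p j`.
lemma exists_ne_cross_ne_of_injective {α : Type*} {p q : Fin 4 → α} (hp : Injective p)
    (hq : Injective q) : ∃ i j, i ≠ j ∧ p i ≠ q j ∧ q i ≠ p j := by
  by_contra! h
  have hQ (j : Fin 4) (hj : 0 ≠ j) : p 0 = q j ∨ q 0 = p j := or_iff_not_imp_left.mpr (h 0 j hj)
  rcases hQ 1 (by decide) with h₁ | h₁ <;> rcases hQ 2 (by decide) with h₂ | h₂ <;>
    rcases hQ 3 (by decide) with h₃ | h₃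
  all_goals first
    | exact hq.ne (by decide : (1 : Fin 4) ≠ 2) (h₁ ▸ h₂)
    | exact hq.ne (by decide : (1 : Fin 4) ≠ 3) (h₁ ▸ h₃)
    | exact hq.ne (by decide : (2 : Fin 4) ≠ 3) (h₂ ▸ h₃)
    | exact hp.ne (by decide : (1 : Fin 4) ≠ 2) (h₁ ▸ h₂)
    | exact hp.ne (by decide : (1 : Fin 4) ≠ 3) (h₁ ▸ h₃)
    | exact hp.ne (by decide : (2 : Fin 4) ≠ 3) (h₂ ▸ h₃)

lemma part_ne_of_mem (hpart : IsPartite H part) (hA : A ∈ H) {x y : V} (hx : x ∈ A)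
    (hy : y ∈ A) (hxy : x ≠ y) : part x ≠ part y := fun h =>
  hxy (card_le_one.mp (hpart A hA (part y)).le x (mem_filter.mpr ⟨hx, h⟩) y
    (mem_filter.mpr ⟨hy, rfl⟩))

lemma card_eq_of_mem (hpart : IsPartite H part) (hA : A ∈ H) : #A = r := by
  rw [card_eq_sum_card_fiberwise (f := part) (t := univ) fun _ _ => mem_univ _,
    sum_congr rfl fun i _ => hpart A hA i]
  simp

lemma hasRainbowCycle_three {x y z : V} (hA : A ∈ H) (hB : B ∈ H) (hC : C ∈ H)
    (hAB : A ≠ B) (hBC : B ≠ C) (hAC : A ≠ C) (hxA : x ∈ A) (hyA : y ∈ A) (hyB : y ∈ B)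
    (hzB : z ∈ B) (hzC : z ∈ C) (hxC : x ∈ C)
    (hxy : part x ≠ part y) (hyz : part y ≠ part z) (hxz : part x ≠ part z) :
    HasRainbowCycle H part 3 := by
  have hrainbow : Injective fun i => part (![x, y, z] i) := by
    intro i j h; fin_cases i <;> fin_cases j <;> simp_all [eq_comm]
  refine ⟨![x, y, z], ![A, B, C], hrainbow.of_comp, ?_, ?_, ?_, hrainbow⟩
  · intro i j h; fin_cases i <;> fin_cases j <;> simp_all [eq_comm]
  · intro i; fin_cases i <;> assumption
  · intro i; fin_cases i
    exacts [⟨hxA, hyA⟩, ⟨hyB, hzB⟩, ⟨hzC, hxC⟩]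

lemma hasRainbowCycle_four {a b c d : V} {D : Finset V} (hA : A ∈ H) (hB : B ∈ H) (hC : C ∈ H)
    (hD : D ∈ H) (hAB : A ≠ B) (hAC : A ≠ C) (hAD : A ≠ D) (hBC : B ≠ C) (hBD : B ≠ D)
    (hCD : C ≠ D) (haA : a ∈ A) (hbA : b ∈ A) (hbB : b ∈ B) (hcB : c ∈ B) (hcC : c ∈ C)
    (hdC : d ∈ C) (hdD : d ∈ D) (haD : a ∈ D) (hab : part a ≠ part b)
    (hac : part a ≠ part c) (had : part a ≠ part d) (hbc : part b ≠ part c)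
    (hbd : part b ≠ part d) (hcd : part c ≠ part d) : HasRainbowCycle H part 4 := by
  have hrainbow : Injective fun i => part (![a, b, c, d] i) := by
    intro i j h; fin_cases i <;> fin_cases j <;> simp_all [eq_comm]
  refine ⟨![a, b, c, d], ![A, B, C, D], hrainbow.of_comp, ?_, ?_, ?_, hrainbow⟩
  · intro i j h; fin_cases i <;> fin_cases j <;> simp_all [eq_comm]
  · intro i; fin_cases i <;> assumption
  · intro i; fin_cases i
    exacts [⟨haA, hbA⟩, ⟨hbB, hcB⟩, ⟨hcC, hdC⟩, ⟨hdD, haD⟩]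

lemma isTriangleHelly_of_not_hasRainbowCycle [DecidableEq V] (hpart : IsPartite H part)
    (h3 : ¬HasRainbowCycle H part 3) : IsTriangleHelly H := by
  intro A hA B hB C hC hAB hBC hAC
  by_contra hempty
  have hno (w : V) (hwA : w ∈ A) (hwB : w ∈ B) (hwC : w ∈ C) : False :=
    hempty ⟨w, by simp [hwA, hwB, hwC]⟩
  obtain ⟨x, hxA, hxB⟩ := not_disjoint_iff.mp hAB
  obtain ⟨y, hyB, hyC⟩ := not_disjoint_iff.mp hBC
  obtain ⟨z, hzA, hzC⟩ := not_disjoint_iff.mp hAC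
  have hxy : x ≠ y := by rintro rfl; exact hno x hxA hxB hyC
  have hyz : y ≠ z := by rintro rfl; exact hno y hzA hyB hyC
  have hxz : x ≠ z := by rintro rfl; exact hno x hxA hxB hzC
  exact h3 (hasRainbowCycle_three hB hC hA (by rintro rfl; exact hno x hxA hxB hxB)
    (by rintro rfl; exact hno y hyC hyB hyC) (by rintro rfl; exact hno z hzA hzA hzC)
    hxB hyB hyC hzC hzA hxA (part_ne_of_mem hpart hB hxB hyB hxy)
    (part_ne_of_mem hpart hC hyC hzC hyz) (part_ne_of_mem hpart hA hxA hzA hxz))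

lemma part_eq_or_part_eq_of_not_hasRainbowCycle (hpart : IsPartite H part)
    (h4 : ¬HasRainbowCycle H part 4) {C' : Finset V} (hA : A ∈ H) (hZ : Z ∈ H)
    (hC : C ∈ H) (hC' : C' ∈ H) (hAZ : Disjoint A Z) (hCC' : C ≠ C') {u w u' w' : V}
    (huA : u ∈ A) (huC : u ∈ C) (hwZ : w ∈ Z) (hwC : w ∈ C) (hu'A : u' ∈ A)
    (hu'C' : u' ∈ C') (hw'Z : w' ∈ Z) (hw'C' : w' ∈ C') (huu' : u ≠ u') (hww' : w ≠ w') :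
    part u = part w' ∨ part w = part u' := by
  by_contra! h
  have hAZ' {x y : V} (hx : x ∈ A) (hy : y ∈ Z) : x ≠ y := by
    rintro rfl; exact disjoint_left.mp hAZ hx hy
  exact h4 (hasRainbowCycle_four hC hZ hC' hA (by rintro rfl; exact hAZ' huA huC rfl) hCC'
    (by rintro rfl; exact hAZ' hwC hwZ rfl) (by rintro rfl; exact hAZ' hu'A hu'C' rfl)
    (by rintro rfl; exact hAZ' huA huA rfl) (by rintro rfl; exact hAZ' hw'C' hw'Z rfl)
    huC hwC hwZ hw'Z hw'C' hu'C' hu'A huA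
    (part_ne_of_mem hpart hC huC hwC (hAZ' huA hwZ)) h.1 (part_ne_of_mem hpart hA huA hu'A huu')
    (part_ne_of_mem hpart hZ hwZ hw'Z hww') h.2
    (part_ne_of_mem hpart hC' hw'C' hu'C' (hAZ' hu'A hw'Z).symm))

lemma disjointCodegreeLE_three_of_not_hasRainbowCycle [DecidableEq V]
    (hpart : IsPartite H part) (hlin : IsLinear H)
    (h3 : ¬HasRainbowCycle H part 3) (h4 : ¬HasRainbowCycle H part 4) :
    DisjointCodegreeLE H 3 := by
  intro A hA Z hZ hAZ
  set R := {C ∈ H | ¬Disjoint A C ∧ ¬Disjoint Z C}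
  by_contra! hR
  have hhelly := isTriangleHelly_of_not_hasRainbowCycle hpart h3
  let e : Fin 4 ↪ R := (Fin.castLEEmb hR).trans R.equivFin.symm.toEmbedding
  set C : Fin 4 → Finset V := fun i => (e i : Finset V)
  have hC : Injective C := Subtype.val_injective.comp e.injective
  have hCR (i : Fin 4) : C i ∈ R := (e i).2
  have hCH (i : Fin 4) : C i ∈ H := (mem_filter.mp (hCR i)).1
  choose u huA huC using fun i => not_disjoint_iff.mp (mem_filter.mp (hCR i)).2.1
  choose w hwZ hwC using fun i => not_disjoint_iff.mp (mem_filter.mp (hCR i)).2.2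
  -- `C i ∩ C j` lies in both `Z` and `A` (each meets both edges), which are disjoint
  have hu : Injective u := fun i j hij => by_contra fun hne =>
    disjoint_left.mp hAZ (huA i) (inter_subset_of_not_disjoint hlin hhelly (hCH i) (hCH j) hZ
      (hC.ne hne) (not_disjoint_iff.mpr ⟨w i, hwZ i, hwC i⟩)
      (not_disjoint_iff.mpr ⟨w j, hwZ j, hwC j⟩) (mem_inter.mpr ⟨huC i, hij ▸ huC j⟩))
  have hw : Injective w := fun i j hij => by_contra fun hne =>
    disjoint_left.mp hAZ (inter_subset_of_not_disjoint hlin hhelly (hCH i) (hCH j) hA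
      (hC.ne hne) (not_disjoint_iff.mpr ⟨u i, huA i, huC i⟩)
      (not_disjoint_iff.mpr ⟨u j, huA j, huC j⟩) (mem_inter.mpr ⟨hwC i, hij ▸ hwC j⟩))
      (hwZ i)
  have hpu : Injective (part ∘ u) := fun i j hij => hu (by_contra fun hne =>
    part_ne_of_mem hpart hA (huA i) (huA j) hne hij)
  have hpw : Injective (part ∘ w) := fun i j hij => hw (by_contra fun hne =>
    part_ne_of_mem hpart hZ (hwZ i) (hwZ j) hne hij)
  obtain ⟨i, j, hij, hi, hj⟩ := exists_ne_cross_ne_of_injective hpu hpw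
  exact (part_eq_or_part_eq_of_not_hasRainbowCycle hpart h4 hA hZ (hCH i) (hCH j) hAZ (hC.ne hij)
    (huA i) (huC i) (hwZ i) (hwC i) (huA j) (huC j) (hwZ j) (hwC j) (hu.ne hij)
    (hw.ne hij)).elim hi hj

end RainbowFree

theorem gfree7_of_no_rainbow {V : Type*} [DecidableEq V] (r : ℕ) (hr : 3 ≤ r)
    (H : Finset (Finset V)) (part : V → Fin r)
    (hpart : ∀ A ∈ H, ∀ i : Fin r, (A.filter fun x => part x = i).card = 1)
    (hlin : ∀ A ∈ H, ∀ B ∈ H, A ≠ B → (A ∩ B).card ≤ 1)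
    (h3 : ¬ HasRainbowCycle H part 3) (h4 : ¬ HasRainbowCycle H part 4) :
    GFree H (7 * r - 11) 7 := by
  intro S hSH hS
  have hexcess : EdgeFamily.excess S ≤ 10 :=
    EdgeFamily.excess_le_ten (EdgeFamily.IsLinear.mono hlin hSH)
      ((isTriangleHelly_of_not_hasRainbowCycle hpart h3).mono hSH)
      ((disjointCodegreeLE_three_of_not_hasRainbowCycle hpart hlin h3 h4).mono hSH) hS
  have hsum : ∑ A ∈ S, #A = 7 * r := by
    rw [sum_congr rfl fun A hA => card_eq_of_mem hpart (hSH hA), sum_const, hS, smul_eq_mul]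
  have hcover : #(S.biUnion id) ≤ ∑ A ∈ S, #A := card_biUnion_le
  rw [EdgeFamily.excess, hsum] at hexcess
  omega
end

section
/- Let r ≥ 3 and let H be an r-uniform r-partite linear hypergraph containing no rainbow cycles of length three or four. If A_1, …, A_6 are six distinct edges of H with |A_1 ∪ ⋯ ∪ A_6| ≤ 6r−9, then |A_1 ∪ ⋯ ∪ A_6| = 6r−9; moreover, exactly nine vertices of A_1 ∪ ⋯ ∪ A_6 belong to exactly two of the edges A_1, …, A_6, and the remaining 6r−18 vertices belong to exactly one of them. -/
open Finset

/-!
Double counting gives `|⋃ Aᵢ| + ∑ᵥ (d(v) - 1) = 6r`, where `d(v)` is the number of the `Aᵢ`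
containing `v`, so the hypothesis says that the excess `∑ᵥ (d(v) - 1)` is at least `9`.
Without rainbow triangles, three pairwise intersecting edges share a vertex. If a vertex `v₀`
lies in `s ≥ 3` of the `Aᵢ`, then by linearity every other vertex lies in at most one of them,
and each remaining `Aⱼ` meets at most one of them away from `v₀`; this bounds the excess by
`(s - 1) + C(6 - s, 2) + (6 - s) ≤ 8`. Hence all degrees are at most `2`, the vertices of degree
`2` inject into the edges of the intersection graph of the `Aᵢ`, which is triangle-free, and
Mantel's theorem bounds their number, which is the excess, by `9`.
-/

theorem Nat.sub_one_le_choose_two (n : ℕ) : n - 1 ≤ n.choose 2 := by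
  cases n with
  | zero => simp
  | succ m => rw [Nat.choose_succ_succ, Nat.choose_one_right]; omega

theorem Finset.sum_sub_one_eq_card_filter_eq_two {α : Type*} {s : Finset α} {f : α → ℕ}
    (h : ∀ x ∈ s, f x = 1 ∨ f x = 2) : ∑ x ∈ s, (f x - 1) = #{x ∈ s | f x = 2} := by
  rw [card_filter]
  refine sum_congr rfl fun x hx => ?_
  rcases h x hx with h | h <;> simp [h]

theorem Finset.card_filter_eq_two_add_card_filter_eq_one {α : Type*} {s : Finset α} {f : α → ℕ}
    (h : ∀ x ∈ s, f x = 1 ∨ f x = 2) : #{x ∈ s | f x = 2} + #{x ∈ s | f x = 1} = #s := by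
  rw [← card_filter_add_card_filter_not (s := s) (fun x => f x = 2)]
  congr 1
  refine congrArg card (filter_congr fun x hx => ?_)
  rcases h x hx with h | h <;> simp [h]

theorem SimpleGraph.CliqueFree.card_edgeFinset_le_sq_div_four {V : Type*} [Fintype V]
    {G : SimpleGraph V} [DecidableRel G.Adj] (h : G.CliqueFree 3) :
    #G.edgeFinset ≤ Fintype.card V ^ 2 / 4 := by
  have hmod : (Fintype.card V % 2).choose 2 = 0 := Nat.choose_eq_zero_of_lt (Nat.mod_lt _ two_pos)
  have := CliqueFree.card_edgeFinset_le (r := 2) h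
  simp only [hmod, add_zero, Nat.add_one_sub_one, mul_one] at this
  exact this.trans (Nat.div_le_div_right (Nat.sub_le _ _))

section Partite

variable {V : Type*} {r : ℕ} {part : V → Fin r} {A : Finset V}

theorem injOn_of_card_fiber_le_one (h : ∀ i, #{x ∈ A | part x = i} ≤ 1) :
    Set.InjOn part A := fun u hu w hw huw =>
  card_le_one.1 (h (part w)) u (mem_filter.2 ⟨hu, huw⟩) w (mem_filter.2 ⟨hw, rfl⟩)

theorem card_eq_of_card_fiber_eq_one (h : ∀ i, #{x ∈ A | part x = i} = 1) : #A = r := by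
  rw [card_eq_sum_card_fiberwise (f := part) (t := univ) fun _ _ => mem_univ _]
  simp [h]

end Partite

section Family

variable {ι V : Type*} [DecidableEq V] (A : ι → Finset V)

def incidence [Fintype ι] (v : V) : Finset ι := {i | v ∈ A i}

def IsLinearFamily : Prop := Pairwise fun i j => #(A i ∩ A j) ≤ 1

def IsTriangleFreeFamily : Prop :=
  ∀ i j k, (A i ∩ A j).Nonempty → (A j ∩ A k).Nonempty → (A i ∩ A k).Nonempty →
    (A i ∩ A j ∩ A k).Nonempty

def intersectionGraph : SimpleGraph ι where
  Adj i j := i ≠ j ∧ ¬Disjoint (A i) (A j)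
  symm := ⟨fun _ _ h => ⟨h.1.symm, fun hd => h.2 hd.symm⟩⟩
  loopless := ⟨fun _ h => h.1 rfl⟩

instance [DecidableEq ι] : DecidableRel (intersectionGraph A).Adj :=
  fun _ _ => inferInstanceAs (Decidable (_ ∧ _))

variable {A}

theorem IsLinearFamily.eq_of_mem (hA : IsLinearFamily A) {i j : ι} (hij : i ≠ j) {v w : V}
    (hvi : v ∈ A i) (hvj : v ∈ A j) (hwi : w ∈ A i) (hwj : w ∈ A j) : v = w :=
  card_le_one.1 (hA hij) v (mem_inter.2 ⟨hvi, hvj⟩) w (mem_inter.2 ⟨hwi, hwj⟩)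

variable [Fintype ι]

@[simp]
theorem mem_incidence {v : V} {i : ι} : i ∈ incidence A v ↔ v ∈ A i := by
  simp [incidence]

theorem mem_biUnion_iff_incidence_nonempty {v : V} :
    v ∈ univ.biUnion A ↔ (incidence A v).Nonempty := by
  simp [Finset.Nonempty]

theorem sum_card_incidence :
    ∑ v ∈ univ.biUnion A, #(incidence A v) = ∑ i, #(A i) := by
  classical
  rw [sum_card_eq_sum_biUnion_card A univ]
  simp [incidence]

theorem card_biUnion_add_sum_card_incidence_sub_one :
    #(univ.biUnion A) + ∑ v ∈ univ.biUnion A, (#(incidence A v) - 1) = ∑ i, #(A i) := by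
  rw [← sum_card_incidence, card_eq_sum_ones, ← sum_add_distrib]
  refine sum_congr rfl fun v hv => ?_
  have := card_pos.2 (mem_biUnion_iff_incidence_nonempty.1 hv)
  omega

variable [DecidableEq ι]

theorem IsLinearFamily.card_incidence_inter_le_one (hA : IsLinearFamily A) {v w : V}
    (hvw : v ≠ w) : #(incidence A v ∩ incidence A w) ≤ 1 := by
  refine card_le_one.2 fun i hi j hj => by_contra fun hij => hvw ?_
  simp only [mem_inter, mem_incidence] at hi hj
  exact hA.eq_of_mem hij hi.1 hj.1 hi.2 hj.2

theorem IsLinearFamily.sum_choose_two_le (hA : IsLinearFamily A) (M : Finset V) (T : Finset ι) :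
    ∑ v ∈ M, (#(incidence A v ∩ T)).choose 2 ≤ (#T).choose 2 := by
  have hdisj : (M : Set V).PairwiseDisjoint fun v => (incidence A v ∩ T).powersetCard 2 := by
    refine fun v _ w _ hvw => disjoint_left.2 fun p hpv hpw => hvw ?_
    rw [mem_powersetCard] at hpv hpw
    obtain ⟨i, j, hij, rfl⟩ := card_eq_two.1 hpv.2
    simp only [insert_subset_iff, singleton_subset_iff, mem_inter, mem_incidence] at hpv hpw
    exact hA.eq_of_mem hij hpv.1.1.1 hpv.1.2.1 hpw.1.1.1 hpw.1.2.1
  calc ∑ v ∈ M, (#(incidence A v ∩ T)).choose 2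
      = #(M.biUnion fun v => (incidence A v ∩ T).powersetCard 2) := by
        simp only [card_biUnion hdisj, card_powersetCard]
    _ ≤ #(T.powersetCard 2) :=
        card_le_card <| biUnion_subset.2 fun _ _ => powersetCard_mono inter_subset_right
    _ = (#T).choose 2 := card_powersetCard _ _

theorem IsLinearFamily.sum_card_mul_card_le (hA : IsLinearFamily A)
    (hT : IsTriangleFreeFamily A) (M : Finset V) (v₀ : V) :
    ∑ v ∈ M, #(incidence A v ∩ incidence A v₀) * #(incidence A v ∩ (incidence A v₀)ᶜ) ≤
      #(incidence A v₀)ᶜ := by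
  set S := incidence A v₀
  set X : V → Finset (ι × ι) := fun v => (incidence A v ∩ S) ×ˢ (incidence A v ∩ Sᶜ)
  have hdisj : (M : Set V).PairwiseDisjoint X := by
    refine fun v _ w _ hvw => disjoint_left.2 fun ⟨j, i⟩ hv hw => hvw ?_
    simp only [X, mem_product, mem_inter, mem_compl, mem_incidence, S] at hv hw
    exact hA.eq_of_mem (fun h : j = i => hv.2.2 (h ▸ hv.1.2)) hv.1.1 hv.2.1 hw.1.1 hw.2.1
  calc ∑ v ∈ M, #(incidence A v ∩ S) * #(incidence A v ∩ Sᶜ)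
      = #(M.biUnion X) := by simp only [card_biUnion hdisj, X, card_product]
    _ ≤ #Sᶜ := by
        refine card_le_card_of_injOn Prod.snd (fun p hp => ?_)
          fun ⟨j, i⟩ hp ⟨j', i'⟩ hp' hii' => ?_
        · obtain ⟨v, -, hv⟩ := mem_biUnion.1 hp
          exact (mem_inter.1 (mem_product.1 hv).2).2
        · obtain ⟨v, -, hv⟩ := mem_biUnion.1 hp
          obtain ⟨w, -, hw⟩ := mem_biUnion.1 hp'
          simp only at hii'
          subst hii'
          simp only [X, mem_product, mem_inter, mem_compl, mem_incidence, S] at hv hw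
          refine Prod.ext (by_contra fun hjj' => hv.2.2 ?_) rfl
          -- The triangle `A j, A j', A i` closes up at `v₀`, the only common vertex of `A j, A j'`.
          obtain ⟨u, hu⟩ := hT j j' i ⟨v₀, mem_inter.2 ⟨hv.1.2, hw.1.2⟩⟩
            ⟨w, mem_inter.2 ⟨hw.1.1, hw.2.1⟩⟩ ⟨v, mem_inter.2 ⟨hv.1.1, hv.2.1⟩⟩
          simp only [mem_inter] at hu
          exact hA.eq_of_mem hjj' hu.1.1 hu.1.2 hv.1.2 hw.1.2 ▸ hu.2

theorem IsLinearFamily.sum_card_incidence_sub_one_le (hA : IsLinearFamily A)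
    (hT : IsTriangleFreeFamily A) {M : Finset V} {v₀ : V} (hv₀ : v₀ ∈ M) :
    ∑ v ∈ M, (#(incidence A v) - 1) ≤
      (#(incidence A v₀) - 1) + (#(incidence A v₀)ᶜ).choose 2 + #(incidence A v₀)ᶜ := by
  set S := incidence A v₀
  have hle (v : V) (hv : v ≠ v₀) : #(incidence A v) - 1 ≤
      (#(incidence A v ∩ Sᶜ)).choose 2 + #(incidence A v ∩ S) * #(incidence A v ∩ Sᶜ) := by
    have hsplit := card_inter_add_card_sdiff (incidence A v) S
    rw [sdiff_eq_inter_compl] at hsplit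
    have hchoose := Nat.sub_one_le_choose_two #(incidence A v ∩ Sᶜ)
    obtain h | h := Nat.le_one_iff_eq_zero_or_eq_one.1 (hA.card_incidence_inter_le_one hv) <;>
      rw [h] at hsplit ⊢ <;> omega
  rw [← add_sum_erase M _ hv₀, add_assoc]
  gcongr
  calc ∑ v ∈ M.erase v₀, (#(incidence A v) - 1)
      ≤ ∑ v ∈ M.erase v₀, ((#(incidence A v ∩ Sᶜ)).choose 2 +
          #(incidence A v ∩ S) * #(incidence A v ∩ Sᶜ)) :=
        sum_le_sum fun v hv => hle v (ne_of_mem_erase hv)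
    _ ≤ ∑ v ∈ M, ((#(incidence A v ∩ Sᶜ)).choose 2 +
          #(incidence A v ∩ S) * #(incidence A v ∩ Sᶜ)) :=
        sum_le_sum_of_subset (erase_subset _ _)
    _ ≤ (#Sᶜ).choose 2 + #Sᶜ := by
        rw [sum_add_distrib]
        exact add_le_add (hA.sum_choose_two_le M Sᶜ) (hA.sum_card_mul_card_le hT M v₀)

theorem IsTriangleFreeFamily.cliqueFree_three (hT : IsTriangleFreeFamily A)
    (h2 : ∀ v, #(incidence A v) ≤ 2) : (intersectionGraph A).CliqueFree 3 := by
  intro s hs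
  obtain ⟨a, b, c, hab, hac, hbc, rfl⟩ := SimpleGraph.is3Clique_iff.1 hs
  simp only [intersectionGraph, not_disjoint_iff_nonempty_inter] at hab hac hbc
  obtain ⟨u, hu⟩ := hT a b c hab.2 hbc.2 hac.2
  simp only [mem_inter] at hu
  have hsub : {a, b, c} ⊆ incidence A u := by
    simp [insert_subset_iff, hu.1.1, hu.1.2, hu.2]
  have := hs.card_eq ▸ card_le_card hsub
  linarith [h2 u]

theorem IsLinearFamily.card_filter_le_card_edgeFinset (hA : IsLinearFamily A) (M : Finset V) :
    #{v ∈ M | 2 ≤ #(incidence A v)} ≤ #(intersectionGraph A).edgeFinset := by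
  refine card_le_card_of_forall_subsingleton (fun v e => ∀ i ∈ e, v ∈ A i) (fun v hv => ?_)
    fun e he v hv w hw => ?_
  · obtain ⟨i, hi, j, hj, hij⟩ := one_lt_card.1 (mem_filter.1 hv).2
    rw [mem_incidence] at hi hj
    refine ⟨s(i, j), ?_, fun k hk => ?_⟩
    · rw [SimpleGraph.mem_edgeFinset, SimpleGraph.mem_edgeSet]
      exact ⟨hij, not_disjoint_iff.2 ⟨v, hi, hj⟩⟩
    · rcases Sym2.mem_iff.1 hk with rfl | rfl <;> assumption
  · induction e using Sym2.ind with
    | _ i j =>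
      rw [SimpleGraph.mem_edgeFinset, SimpleGraph.mem_edgeSet] at he
      simp only [Set.mem_ofPred_eq, Sym2.mem_iff, forall_eq_or_imp, forall_eq] at hv hw
      exact hA.eq_of_mem he.1 hv.2.1 hv.2.2 hw.2.1 hw.2.2

theorem IsLinearFamily.card_filter_card_incidence_eq_two_le (hA : IsLinearFamily A)
    (hT : IsTriangleFreeFamily A) (h2 : ∀ v, #(incidence A v) ≤ 2) (M : Finset V) :
    #{v ∈ M | #(incidence A v) = 2} ≤ Fintype.card ι ^ 2 / 4 := calc
  _ ≤ #{v ∈ M | 2 ≤ #(incidence A v)} :=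
    card_le_card fun v hv => by
      rw [mem_filter] at hv ⊢
      exact ⟨hv.1, hv.2.ge⟩
  _ ≤ #(intersectionGraph A).edgeFinset := hA.card_filter_le_card_edgeFinset M
  _ ≤ Fintype.card ι ^ 2 / 4 := (hT.cliqueFree_three h2).card_edgeFinset_le_sq_div_four

end Family

theorem IsLinearFamily.card_incidence_le_two {V : Type*} [DecidableEq V] {A : Fin 6 → Finset V}
    (hA : IsLinearFamily A) (hT : IsTriangleFreeFamily A)
    (h9 : 9 ≤ ∑ v ∈ univ.biUnion A, (#(incidence A v) - 1)) (v : V) : #(incidence A v) ≤ 2 := by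
  by_contra! hv
  have hvN : v ∈ univ.biUnion A := mem_biUnion_iff_incidence_nonempty.2 (card_pos.1 (by omega))
  have hbound := hA.sum_card_incidence_sub_one_le hT hvN
  have h6 : #(incidence A v) ≤ 6 := card_le_univ _
  rw [card_compl, Fintype.card_fin] at hbound
  interval_cases #(incidence A v) <;> rw [Nat.choose_two_right] at hbound <;> omega

theorem hasRainbowCycle_three_s14 {V : Type*} {r : ℕ} {H : Finset (Finset V)} {part : V → Fin r}
    {B C D : Finset V} (hB : B ∈ H) (hC : C ∈ H) (hD : D ∈ H)
    (hBC : B ≠ C) (hCD : C ≠ D) (hBD : B ≠ D) {x y z : V}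
    (hxB : x ∈ B) (hxC : x ∈ C) (hyC : y ∈ C) (hyD : y ∈ D) (hzD : z ∈ D) (hzB : z ∈ B)
    (hxy : part x ≠ part y) (hyz : part y ≠ part z) (hxz : part x ≠ part z) :
    HasRainbowCycle H part 3 := by
  have hparts : Function.Injective fun i => part (![x, y, z] i) := by
    intro a b hab
    fin_cases a <;> fin_cases b <;> simp_all [eq_comm]
  refine ⟨![x, y, z], ![C, D, B], hparts.of_comp, ?_, ?_, ?_, hparts⟩
  · intro a b hab
    fin_cases a <;> fin_cases b <;> simp_all [eq_comm]
  · intro a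
    fin_cases a <;> simp [hB, hC, hD]
  · intro a
    fin_cases a <;> simp [*]

theorem isTriangleFreeFamily_of_not_hasRainbowCycle {V ι : Type*} [DecidableEq V] {r : ℕ}
    {H : Finset (Finset V)} {part : V → Fin r}
    (hpart : ∀ A ∈ H, ∀ i, #{x ∈ A | part x = i} = 1) (h3 : ¬HasRainbowCycle H part 3)
    {A : ι → Finset V} (hA : ∀ i, A i ∈ H) (hinj : Function.Injective A) :
    IsTriangleFreeFamily A := by
  intro i j k ⟨x, hx⟩ ⟨y, hy⟩ ⟨z, hz⟩
  rw [mem_inter] at hx hy hz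
  by_contra hnone
  have hcommon (u : V) (hi : u ∈ A i) (hj : u ∈ A j) (hk : u ∈ A k) : False :=
    hnone ⟨u, by simp [hi, hj, hk]⟩
  have hinjOn (l : ι) := injOn_of_card_fiber_le_one fun c => (hpart _ (hA l) c).le
  refine h3 (hasRainbowCycle_three_s14 (hA i) (hA j) (hA k) (hinj.ne ?_) (hinj.ne ?_) (hinj.ne ?_)
    hx.1 hx.2 hy.1 hy.2 hz.2 hz.1 (fun h => ?_) (fun h => ?_) (fun h => ?_))
  · rintro rfl; exact hcommon y hy.1 hy.1 hy.2
  · rintro rfl; exact hcommon x hx.1 hx.2 hx.2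
  · rintro rfl; exact hcommon y hy.2 hy.1 hy.2
  · obtain rfl := hinjOn j hx.2 hy.1 h; exact hcommon x hx.1 hx.2 hy.2
  · obtain rfl := hinjOn k hy.2 hz.2 h; exact hcommon y hz.1 hy.1 hy.2
  · obtain rfl := hinjOn i hx.1 hz.1 h; exact hcommon x hx.1 hx.2 hz.2

theorem six_edges_classification_general {V : Type*} [DecidableEq V] (r : ℕ) (hr : 3 ≤ r)
    (H : Finset (Finset V)) (part : V → Fin r)
    (hpart : ∀ A ∈ H, ∀ i : Fin r, (A.filter fun x => part x = i).card = 1)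
    (hlin : ∀ A ∈ H, ∀ B ∈ H, A ≠ B → (A ∩ B).card ≤ 1)
    (h3 : ¬ HasRainbowCycle H part 3)
    (A : Fin 6 → Finset V) (hA : ∀ i, A i ∈ H) (hinj : Function.Injective A)
    (hcard : ((Finset.univ : Finset (Fin 6)).biUnion A).card ≤ 6 * r - 9) :
    ((Finset.univ : Finset (Fin 6)).biUnion A).card = 6 * r - 9 ∧
    (((Finset.univ : Finset (Fin 6)).biUnion A).filter
        (fun x => (Finset.univ.filter (fun i => x ∈ A i)).card = 2)).card = 9 ∧
    (((Finset.univ : Finset (Fin 6)).biUnion A).filter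
        (fun x => (Finset.univ.filter (fun i => x ∈ A i)).card = 1)).card = 6 * r - 18 := by
  have hlinA : IsLinearFamily A := fun i j hij => hlin _ (hA i) _ (hA j) (hinj.ne hij)
  have htri := isTriangleFreeFamily_of_not_hasRainbowCycle hpart h3 hA hinj
  have hcount := card_biUnion_add_sum_card_incidence_sub_one (A := A)
  simp only [card_eq_of_card_fiber_eq_one (hpart _ (hA _)), sum_const, card_univ,
    Fintype.card_fin, smul_eq_mul] at hcount
  have hle2 := hlinA.card_incidence_le_two htri (by omega)
  have h12 (v : V) (hv : v ∈ univ.biUnion A) : #(incidence A v) = 1 ∨ #(incidence A v) = 2 := by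
    have := card_pos.2 (mem_biUnion_iff_incidence_nonempty.1 hv)
    have := hle2 v
    omega
  have h9 := hlinA.card_filter_card_incidence_eq_two_le htri hle2 (univ.biUnion A)
  norm_num at h9
  have hsum := sum_sub_one_eq_card_filter_eq_two h12
  have hsplit := card_filter_eq_two_add_card_filter_eq_one h12
  show _ ∧ #{v ∈ _ | #(incidence A v) = 2} = 9 ∧ #{v ∈ _ | #(incidence A v) = 1} = _
  exact ⟨by omega, by omega, by omega⟩

theorem six_edges_classification {V : Type*} [DecidableEq V] (r : ℕ) (hr : 3 ≤ r)
    (H : Finset (Finset V)) (part : V → Fin r)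
    (hpart : ∀ A ∈ H, ∀ i : Fin r, (A.filter fun x => part x = i).card = 1)
    (hlin : ∀ A ∈ H, ∀ B ∈ H, A ≠ B → (A ∩ B).card ≤ 1)
    (h3 : ¬ HasRainbowCycle H part 3) (h4 : ¬ HasRainbowCycle H part 4)
    (A : Fin 6 → Finset V) (hA : ∀ i, A i ∈ H) (hinj : Function.Injective A)
    (hcard : ((Finset.univ : Finset (Fin 6)).biUnion A).card ≤ 6 * r - 9) :
    ((Finset.univ : Finset (Fin 6)).biUnion A).card = 6 * r - 9 ∧
    (((Finset.univ : Finset (Fin 6)).biUnion A).filter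
        (fun x => (Finset.univ.filter (fun i => x ∈ A i)).card = 2)).card = 9 ∧
    (((Finset.univ : Finset (Fin 6)).biUnion A).filter
        (fun x => (Finset.univ.filter (fun i => x ∈ A i)).card = 1)).card = 6 * r - 18 :=
  six_edges_classification_general r hr H part hpart hlin h3 A hA hinj hcard
end

section
/- Let r ≥ 3 and let H be an r-uniform r-partite linear hypergraph containing no rainbow cycles of length three or four. If A_1, …, A_6 are six distinct edges of H with |A_1 ∪ ⋯ ∪ A_6| ≤ 6r−9, then for every edge A_7 of H distinct from A_1, …, A_6 one has |A_7 ∩ (A_1 ∪ ⋯ ∪ A_6)| ≤ 1. -/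
/-!
Count the points of `U = A₁ ∪ ⋯ ∪ A₆` with multiplicity: a point lying in `m` of the edges
contributes `m - 1` to `6r - |U| ≥ 9`. Joining, for each such point, the least edge through it
to the other edges through it gives a graph on the six edges with at least `9` edges (linearity
makes these stars edge-disjoint), and it is triangle-free because a rainbow-triangle-free
family of three pairwise meeting edges has a common point, so that a triangle would lie in one
star. By Turán's theorem this graph is `K₃,₃`, so any two disjoint edges `A_i, A_j` have three
common neighbours `A_k`. Now if `B` met `U` in `x ∈ A_i` and `y ∈ A_j`, then `A_i` and `A_j`
are disjoint (otherwise `B, A_i, A_j` is a rainbow triangle), and at least one of the three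
`A_k`, meeting `A_i` in `u` and `A_j` in `w`, has `part u ≠ part y` and `part w ≠ part x`:
then `x, y, w, u` is a rainbow 4-cycle through `B, A_j, A_k, A_i`.
-/

open Finset

lemma Finset.exists_mem_ne_and_ne_of_injOn {α β γ : Type*} {s : Finset α} (hs : 3 ≤ #s)
    {f : α → β} {g : α → γ} (hf : Set.InjOn f s) (hg : Set.InjOn g s) (b : β) (c : γ) :
    ∃ a ∈ s, f a ≠ b ∧ g a ≠ c := by
  classical
  by_contra! h
  have hb : #{a ∈ s | f a = b} ≤ 1 := card_le_one.2 fun a ha a' ha' => by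
    simp only [mem_filter] at ha ha'
    exact hf ha.1 ha'.1 (ha.2.trans ha'.2.symm)
  have hc : #{a ∈ s | g a = c} ≤ 1 := card_le_one.2 fun a ha a' ha' => by
    simp only [mem_filter] at ha ha'
    exact hg ha.1 ha'.1 (ha.2.trans ha'.2.symm)
  have hsub : s ⊆ {a ∈ s | f a = b} ∪ {a ∈ s | g a = c} := fun a ha => by
    by_cases hfa : f a = b <;> simp [ha, hfa, h a ha]
  have := (card_le_card hsub).trans (card_union_le _ _)
  omega

namespace SimpleGraph

lemma three_le_card_commonNeighbors_of_cliqueFree_three {G : SimpleGraph (Fin 6)}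
    [DecidableRel G.Adj] (hG : G.CliqueFree 3) (hcard : 9 ≤ #G.edgeFinset) {i j : Fin 6}
    (hij : i ≠ j) (hadj : ¬G.Adj i j) : 3 ≤ #{k | G.Adj i k ∧ G.Adj j k} := by
  have hmax : G.IsTuranMaximal 2 :=
    ⟨hG, fun G' _ hG' => hG'.card_edgeFinset_le.trans (by simpa using hcard)⟩
  obtain ⟨f⟩ : Nonempty (G ≃g turanGraph 6 2) := hmax.nonempty_iso_turanGraph
  have hT : ∀ a b, a ≠ b → ¬(turanGraph 6 2).Adj a b →
      3 ≤ #{k | (turanGraph 6 2).Adj a k ∧ (turanGraph 6 2).Adj b k} := by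
    decide
  calc 3 ≤ #{k | (turanGraph 6 2).Adj (f i) k ∧ (turanGraph 6 2).Adj (f j) k} :=
        hT (f i) (f j) (f.injective.ne hij) (f.map_adj_iff.not.2 hadj)
    _ = #{k | G.Adj i k ∧ G.Adj j k} :=
        (card_equiv f.toEquiv fun k => by
          simpa using (and_congr f.map_adj_iff f.map_adj_iff).symm).symm

end SimpleGraph

section OverlapStarGraph

variable {ι V : Type*} [LinearOrder ι]

def overlapStarGraph (A : ι → Finset V) : SimpleGraph ι :=
  SimpleGraph.fromRel fun a b => ∃ z ∈ A b, IsLeast {c | z ∈ A c} a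

variable {A : ι → Finset V}

lemma overlapStarGraph_adj_inter_nonempty [DecidableEq V] {a b : ι}
    (h : (overlapStarGraph A).Adj a b) : (A a ∩ A b).Nonempty := by
  obtain ⟨-, ⟨z, hzb, hza, -⟩ | ⟨z, hza, hzb, -⟩⟩ := h
  · exact ⟨z, mem_inter.2 ⟨hza, hzb⟩⟩
  · exact ⟨z, mem_inter.2 ⟨hza, hzb⟩⟩

lemma isLeast_of_overlapStarGraph_adj [DecidableEq V]
    (hA : ∀ a b, a ≠ b → #(A a ∩ A b) ≤ 1) {a b : ι} (h : (overlapStarGraph A).Adj a b)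
    {z : V} (hza : z ∈ A a) (hzb : z ∈ A b) :
    IsLeast {c | z ∈ A c} a ∨ IsLeast {c | z ∈ A c} b := by
  have hz : ∀ z' ∈ A a, z' ∈ A b → z' = z := fun z' hz'a hz'b =>
    card_le_one.1 (hA a b h.1) z' (mem_inter.2 ⟨hz'a, hz'b⟩) z (mem_inter.2 ⟨hza, hzb⟩)
  obtain ⟨-, ⟨z', hz'b, hz'⟩ | ⟨z', hz'a, hz'⟩⟩ := h
  · exact .inl (hz z' hz'.1 hz'b ▸ hz')
  · exact .inr (hz z' hz'a hz'.1 ▸ hz')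

lemma cliqueFree_three_overlapStarGraph [DecidableEq V]
    (hA : ∀ a b, a ≠ b → #(A a ∩ A b) ≤ 1)
    (htri : ∀ a b c, a ≠ b → a ≠ c → b ≠ c → (A a ∩ A b).Nonempty → (A a ∩ A c).Nonempty →
      (A b ∩ A c).Nonempty → (A a ∩ A b ∩ A c).Nonempty) :
    (overlapStarGraph A).CliqueFree 3 := by
  intro s hs
  obtain ⟨a, b, c, hab, hac, hbc, rfl⟩ := card_eq_three.1 hs.card_eq
  obtain ⟨hab', hac', hbc'⟩ := SimpleGraph.is3Clique_triple_iff.1 hs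
  obtain ⟨z, hz⟩ := htri a b c hab hac hbc (overlapStarGraph_adj_inter_nonempty hab')
    (overlapStarGraph_adj_inter_nonempty hac') (overlapStarGraph_adj_inter_nonempty hbc')
  simp only [mem_inter] at hz
  -- all three edges would be rooted at the least index of a set containing `z`
  have h₁ := isLeast_of_overlapStarGraph_adj hA hab' hz.1.1 hz.1.2
  have h₂ := isLeast_of_overlapStarGraph_adj hA hac' hz.1.1 hz.2
  have h₃ := isLeast_of_overlapStarGraph_adj hA hbc' hz.1.2 hz.2
  rcases h₁ with h₁ | h₁ <;> rcases h₂ with h₂ | h₂ <;> rcases h₃ with h₃ | h₃ <;>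
    grind [IsLeast.unique]

lemma card_sigma_le_card_edgeFinset_overlapStarGraph [DecidableEq V]
    [Fintype ι] [DecidableRel (overlapStarGraph A).Adj] (hA : ∀ a b, a ≠ b → #(A a ∩ A b) ≤ 1)
    {U : Finset V} {root : V → ι} (hroot : ∀ z ∈ U, IsLeast {c | z ∈ A c} (root z)) :
    #(U.sigma fun z => ({c | z ∈ A c} : Finset ι).erase (root z)) ≤
      #(overlapStarGraph A).edgeFinset := by
  have hmem : ∀ z ∈ U, z ∈ A (root z) := fun z hz => (hroot z hz).1
  have hcommon : ∀ a b, a ≠ b → ∀ x ∈ A a, x ∈ A b → ∀ y ∈ A a, y ∈ A b → x = y :=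
    fun a b hab x hxa hxb y hya hyb =>
      card_le_one.1 (hA a b hab) x (mem_inter.2 ⟨hxa, hxb⟩) y (mem_inter.2 ⟨hya, hyb⟩)
  refine card_le_card_of_injOn (fun p => s(root p.1, p.2)) ?_ ?_
  · rintro ⟨z, c⟩ hp
    simp only [coe_sigma, Set.mem_sigma_iff, mem_coe, mem_erase, mem_filter, mem_univ,
      true_and] at hp
    rw [mem_coe, SimpleGraph.mem_edgeFinset, SimpleGraph.mem_edgeSet]
    exact ⟨Ne.symm hp.2.1, .inl ⟨z, hp.2.2, hroot z hp.1⟩⟩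
  · rintro ⟨z, c⟩ hp ⟨z', c'⟩ hp' h
    simp only [coe_sigma, Set.mem_sigma_iff, mem_coe, mem_erase, mem_filter, mem_univ,
      true_and] at hp hp'
    rcases Sym2.eq_iff.1 h with ⟨hr, rfl⟩ | ⟨hr, rfl⟩
    · obtain rfl : z = z' :=
        hcommon _ _ hp.2.1.symm z (hmem z hp.1) hp.2.2 z' (hr ▸ hmem z' hp'.1) hp'.2.2
      rfl
    · obtain rfl : z = z' :=
        hcommon _ _ hp.2.1.symm z (hmem z hp.1) hp.2.2 z' (hr ▸ hp'.2.2) (hmem z' hp'.1)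
      exact absurd rfl hp.2.1

lemma sum_card_le_card_biUnion_add_card_edgeFinset_overlapStarGraph [DecidableEq V]
    [Fintype ι] [DecidableRel (overlapStarGraph A).Adj] (hA : ∀ a b, a ≠ b → #(A a ∩ A b) ≤ 1) :
    ∑ a, #(A a) ≤ #(univ.biUnion A) + #(overlapStarGraph A).edgeFinset := by
  set U := univ.biUnion A
  set S : V → Finset ι := fun z => {c | z ∈ A c}
  have hroot : ∀ z ∈ U, ∃ m, IsLeast {c | z ∈ A c} m := by
    intro z hz
    obtain ⟨a, -, hza⟩ := mem_biUnion.1 hz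
    exact ⟨_, by simpa [S] using isLeast_min' (S z) ⟨a, by simpa [S] using hza⟩⟩
  cases isEmpty_or_nonempty ι
  · simp
  choose! root hroot using hroot
  calc ∑ a, #(A a) = ∑ z ∈ U, #(S z) := by
        simpa [S] using sum_card_eq_sum_biUnion_card A univ
    _ = ∑ z ∈ U, (#((S z).erase (root z)) + 1) :=
        sum_congr rfl fun z hz => (card_erase_add_one (by simpa [S] using (hroot z hz).1)).symm
    _ = #U + #(U.sigma fun z => (S z).erase (root z)) := by
        rw [card_sigma, sum_add_distrib, sum_const, smul_eq_mul, mul_one, add_comm]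
    _ ≤ #U + #(overlapStarGraph A).edgeFinset :=
        add_le_add_right (card_sigma_le_card_edgeFinset_overlapStarGraph hA hroot) _

end OverlapStarGraph

namespace Hypergraph

variable {V : Type*} {r : ℕ}

def IsPartite (H : Finset (Finset V)) (part : V → Fin r) : Prop :=
  ∀ A ∈ H, ∀ i : Fin r, #{x ∈ A | part x = i} = 1

variable {H : Finset (Finset V)} {part : V → Fin r} {E F : Finset V}

lemma IsPartite.injOn (hpart : IsPartite H part) (hE : E ∈ H) : Set.InjOn part E :=
  fun x hx y hy hxy =>
    card_le_one.1 (hpart E hE (part x)).le x (mem_filter.2 ⟨hx, rfl⟩) y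
      (mem_filter.2 ⟨hy, hxy.symm⟩)

lemma IsPartite.card_eq (hpart : IsPartite H part) (hE : E ∈ H) : #E = r := by
  rw [card_eq_sum_card_fiberwise fun x _ => mem_univ (part x)]
  simp [hpart E hE]

variable [DecidableEq V]

def IsLinear (H : Finset (Finset V)) : Prop :=
  ∀ A ∈ H, ∀ B ∈ H, A ≠ B → #(A ∩ B) ≤ 1

lemma IsLinear.eq_of_mem_of_mem (hlin : IsLinear H) (hE : E ∈ H) (hF : F ∈ H) {x y : V}
    (hxy : x ≠ y) (hxE : x ∈ E) (hyE : y ∈ E) (hxF : x ∈ F) (hyF : y ∈ F) : E = F := by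
  by_contra hEF
  exact hxy (card_le_one.1 (hlin E hE F hF hEF) x (mem_inter.2 ⟨hxE, hxF⟩) y
    (mem_inter.2 ⟨hyE, hyF⟩))

lemma hasRainbowCycle_three (hpart : IsPartite H part) {E₀ E₁ E₂ : Finset V} (hE₀ : E₀ ∈ H)
    (hE₁ : E₁ ∈ H) (hE₂ : E₂ ∈ H) (hE₀₁ : E₀ ≠ E₁) (hE₀₂ : E₀ ≠ E₂) (hE₁₂ : E₁ ≠ E₂)
    {v₀ v₁ v₂ : V} (hv₀ : v₀ ∈ E₂ ∩ E₀) (hv₁ : v₁ ∈ E₀ ∩ E₁) (hv₂ : v₂ ∈ E₁ ∩ E₂)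
    (hv₀₁ : v₀ ≠ v₁) (hv₀₂ : v₀ ≠ v₂) (hv₁₂ : v₁ ≠ v₂) : HasRainbowCycle H part 3 := by
  rw [mem_inter] at hv₀ hv₁ hv₂
  have hp₀₁ := (hpart.injOn hE₀).ne hv₀.2 hv₁.1 hv₀₁
  have hp₀₂ := (hpart.injOn hE₂).ne hv₀.1 hv₂.2 hv₀₂
  have hp₁₂ := (hpart.injOn hE₁).ne hv₁.2 hv₂.1 hv₁₂
  have hinj : Function.Injective fun i => part (![v₀, v₁, v₂] i) := by
    intro i j h; fin_cases i <;> fin_cases j <;> simp_all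
  refine ⟨_, ![E₀, E₁, E₂], hinj.of_comp, ?_, ?_, ?_, hinj⟩
  · intro i j h; fin_cases i <;> fin_cases j <;> simp_all
  · intro i; fin_cases i <;> assumption
  · intro i; fin_cases i <;> simp_all

lemma hasRainbowCycle_four (hpart : IsPartite H part) {E₀ E₁ E₂ E₃ : Finset V} (hE₀ : E₀ ∈ H)
    (hE₁ : E₁ ∈ H) (hE₂ : E₂ ∈ H) (hE₃ : E₃ ∈ H) (hE₀₁ : E₀ ≠ E₁) (hE₀₂ : E₀ ≠ E₂)
    (hE₀₃ : E₀ ≠ E₃) (hE₁₂ : E₁ ≠ E₂) (hE₁₃ : E₁ ≠ E₃) (hE₂₃ : E₂ ≠ E₃) {v₀ v₁ v₂ v₃ : V}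
    (hv₀ : v₀ ∈ E₃ ∩ E₀) (hv₁ : v₁ ∈ E₀ ∩ E₁) (hv₂ : v₂ ∈ E₁ ∩ E₂) (hv₃ : v₃ ∈ E₂ ∩ E₃)
    (hv₀₁ : v₀ ≠ v₁) (hv₁₂ : v₁ ≠ v₂) (hv₂₃ : v₂ ≠ v₃) (hv₀₃ : v₀ ≠ v₃)
    (hp₀₂ : part v₀ ≠ part v₂) (hp₁₃ : part v₁ ≠ part v₃) : HasRainbowCycle H part 4 := by
  rw [mem_inter] at hv₀ hv₁ hv₂ hv₃
  have hp₀₁ := (hpart.injOn hE₀).ne hv₀.2 hv₁.1 hv₀₁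
  have hp₁₂ := (hpart.injOn hE₁).ne hv₁.2 hv₂.1 hv₁₂
  have hp₂₃ := (hpart.injOn hE₂).ne hv₂.2 hv₃.1 hv₂₃
  have hp₀₃ := (hpart.injOn hE₃).ne hv₀.1 hv₃.2 hv₀₃
  have hinj : Function.Injective fun i => part (![v₀, v₁, v₂, v₃] i) := by
    intro i j h; fin_cases i <;> fin_cases j <;> simp_all
  refine ⟨_, ![E₀, E₁, E₂, E₃], hinj.of_comp, ?_, ?_, ?_, hinj⟩
  · intro i j h; fin_cases i <;> fin_cases j <;> simp_all
  · intro i; fin_cases i <;> assumption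
  · intro i; fin_cases i <;> simp_all

lemma inter_inter_nonempty_of_pairwise (hpart : IsPartite H part)
    (h3 : ¬HasRainbowCycle H part 3) {E₀ E₁ E₂ : Finset V} (hE₀ : E₀ ∈ H) (hE₁ : E₁ ∈ H)
    (hE₂ : E₂ ∈ H) (hE₀₁ : E₀ ≠ E₁) (hE₀₂ : E₀ ≠ E₂) (hE₁₂ : E₁ ≠ E₂)
    (h₀₁ : (E₀ ∩ E₁).Nonempty) (h₀₂ : (E₀ ∩ E₂).Nonempty) (h₁₂ : (E₁ ∩ E₂).Nonempty) :
    (E₀ ∩ E₁ ∩ E₂).Nonempty := by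
  obtain ⟨u, hu⟩ := h₀₁
  obtain ⟨v, hv⟩ := h₁₂
  obtain ⟨w, hw⟩ := h₀₂
  by_contra hne
  simp only [mem_inter] at hu hv hw
  refine h3 (hasRainbowCycle_three hpart hE₀ hE₁ hE₂ hE₀₁ hE₀₂ hE₁₂ (v₀ := w) (v₁ := u) (v₂ := v)
    (by simp [hw]) (by simp [hu]) (by simp [hv]) ?_ ?_ ?_)
  · rintro rfl
    exact hne ⟨w, by simp [hu, hw]⟩
  · rintro rfl
    exact hne ⟨w, by simp [hv, hw]⟩
  · rintro rfl
    exact hne ⟨u, by simp [hu, hv]⟩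

lemma mem_of_mem_inter_of_pairwise (hpart : IsPartite H part) (hlin : IsLinear H)
    (h3 : ¬HasRainbowCycle H part 3) {C C' : Finset V} (hC : C ∈ H) (hC' : C' ∈ H) (hF : F ∈ H)
    (hCC' : C ≠ C') (hCF : C ≠ F) (hC'F : C' ≠ F) {u : V} (hu : u ∈ C ∩ C')
    (hCF' : (C ∩ F).Nonempty) (hC'F' : (C' ∩ F).Nonempty) : u ∈ F := by
  obtain ⟨z, hz⟩ := inter_inter_nonempty_of_pairwise hpart h3 hC hC' hF hCC' hCF hC'F ⟨u, hu⟩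
    hCF' hC'F'
  simp only [mem_inter] at hu hz
  by_contra huF
  exact hCC' (hlin.eq_of_mem_of_mem hC hC' (ne_of_mem_of_not_mem hz.2 huF).symm hu.1 hz.1.1
    hu.2 hz.1.2)

lemma disjoint_of_mem_inter (hpart : IsPartite H part) (hlin : IsLinear H)
    (h3 : ¬HasRainbowCycle H part 3) {B : Finset V} (hB : B ∈ H) (hE : E ∈ H) (hF : F ∈ H)
    (hBE : B ≠ E) (hBF : B ≠ F) {x y : V} (hxy : x ≠ y) (hx : x ∈ B ∩ E) (hy : y ∈ B ∩ F) :
    Disjoint E F := by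
  rw [mem_inter] at hx hy
  have hEF : E ≠ F := by
    rintro rfl
    exact hBE (hlin.eq_of_mem_of_mem hB hE hxy hx.1 hy.1 hx.2 hy.2)
  refine disjoint_left.2 fun p hpE hpF => hBF (hlin.eq_of_mem_of_mem hB hF hxy hx.1 hy.1 ?_ hy.2)
  exact mem_of_mem_inter_of_pairwise hpart hlin h3 hB hE hF hBE hBF hEF (mem_inter.2 hx)
    ⟨y, mem_inter.2 hy⟩ ⟨p, mem_inter.2 ⟨hpE, hpF⟩⟩

lemma injOn_of_mem_inter_of_disjoint (hpart : IsPartite H part) (hlin : IsLinear H)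
    (h3 : ¬HasRainbowCycle H part 3) (hF : F ∈ H) (hEF : Disjoint E F) {ι : Type*}
    {K : Finset ι} {C : ι → Finset V} (hC : ∀ k ∈ K, C k ∈ H) (hCinj : Set.InjOn C K)
    (hCF : ∀ k ∈ K, (C k ∩ F).Nonempty) {u : ι → V} (hu : ∀ k ∈ K, u k ∈ C k ∩ E) :
    Set.InjOn u K := by
  have hCF' : ∀ k ∈ K, C k ≠ F := fun k hk h =>
    disjoint_left.1 hEF (mem_inter.1 (hu k hk)).2 (h ▸ (mem_inter.1 (hu k hk)).1)
  intro k hk k' hk' h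
  by_contra hkk
  refine disjoint_left.1 hEF (mem_inter.1 (hu k hk)).2 ?_
  refine mem_of_mem_inter_of_pairwise hpart hlin h3 (hC k hk) (hC k' hk') hF
    (hCinj.ne hk hk' hkk) (hCF' k hk) (hCF' k' hk') ?_ (hCF k hk) (hCF k' hk')
  exact mem_inter.2 ⟨(mem_inter.1 (hu k hk)).1, h ▸ (mem_inter.1 (hu k' hk')).1⟩

lemma hasRainbowCycle_four_of_three_le_card (hpart : IsPartite H part) (hlin : IsLinear H)
    (h3 : ¬HasRainbowCycle H part 3) {B : Finset V} (hB : B ∈ H) (hE : E ∈ H) (hF : F ∈ H)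
    (hBE : B ≠ E) (hBF : B ≠ F) {x y : V} (hxy : x ≠ y) (hx : x ∈ B ∩ E) (hy : y ∈ B ∩ F)
    {ι : Type*} {K : Finset ι} (hK : 3 ≤ #K) {C : ι → Finset V} (hC : ∀ k ∈ K, C k ∈ H)
    (hCinj : Set.InjOn C K) (hCB : ∀ k ∈ K, C k ≠ B)
    (hCEF : ∀ k ∈ K, (C k ∩ E).Nonempty ∧ (C k ∩ F).Nonempty) :
    HasRainbowCycle H part 4 := by
  have hEF := disjoint_of_mem_inter hpart hlin h3 hB hE hF hBE hBF hxy hx hy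
  rw [mem_inter] at hx hy
  have hCE : ∀ k ∈ K, C k ≠ E := fun k hk h =>
    (not_disjoint_iff_nonempty_inter.2 (h ▸ (hCEF k hk).2)) hEF
  have hCF : ∀ k ∈ K, C k ≠ F := fun k hk h =>
    (not_disjoint_iff_nonempty_inter.2 (h ▸ (hCEF k hk).1)) hEF.symm
  have : Nonempty V := ⟨x⟩
  choose! u hu using fun k hk => (hCEF k hk).1
  choose! w hw using fun k hk => (hCEF k hk).2
  have hu_inj := injOn_of_mem_inter_of_disjoint hpart hlin h3 hF hEF hC hCinj
    (fun k hk => (hCEF k hk).2) hu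
  have hw_inj := injOn_of_mem_inter_of_disjoint hpart hlin h3 hE hEF.symm hC hCinj
    (fun k hk => (hCEF k hk).1) hw
  obtain ⟨k, hk, hyu, hxw⟩ := exists_mem_ne_and_ne_of_injOn hK
    ((hpart.injOn hE).comp hu_inj fun k hk => (mem_inter.1 (hu k hk)).2)
    ((hpart.injOn hF).comp hw_inj fun k hk => (mem_inter.1 (hw k hk)).2) (part y) (part x)
  have hxC : x ∉ C k := fun hxC => disjoint_left.1 hEF hx.2 <|
    mem_of_mem_inter_of_pairwise hpart hlin h3 hB (hC k hk) hF (hCB k hk).symm hBF (hCF k hk)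
      (mem_inter.2 ⟨hx.1, hxC⟩) ⟨y, mem_inter.2 hy⟩ (hCEF k hk).2
  have hyC : y ∉ C k := fun hyC => disjoint_left.1 hEF (mem_of_mem_inter_of_pairwise hpart hlin
    h3 hB (hC k hk) hE (hCB k hk).symm hBE (hCE k hk) (mem_inter.2 ⟨hy.1, hyC⟩)
    ⟨x, mem_inter.2 hx⟩ (hCEF k hk).1) hy.2
  have hu' := mem_inter.1 (hu k hk)
  have hw' := mem_inter.1 (hw k hk)
  exact hasRainbowCycle_four hpart hB hF (hC k hk) hE hBF (hCB k hk).symm hBE (hCF k hk).symm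
    (fun h => disjoint_left.1 hEF hx.2 (h ▸ hx.2)) (hCE k hk)
    (mem_inter.2 ⟨hx.2, hx.1⟩) (mem_inter.2 hy) (mem_inter.2 ⟨hw'.2, hw'.1⟩) (mem_inter.2 hu')
    hxy (ne_of_mem_of_not_mem hw'.1 hyC).symm (fun h => disjoint_left.1 hEF hu'.2 (h ▸ hw'.2))
    (ne_of_mem_of_not_mem hu'.1 hxC).symm (Ne.symm hxw) (Ne.symm hyu)

lemma three_le_card_filter_inter_nonempty (hr : 3 ≤ r) (hpart : IsPartite H part)
    (hlin : IsLinear H) (h3 : ¬HasRainbowCycle H part 3) {A : Fin 6 → Finset V}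
    (hA : ∀ i, A i ∈ H) (hinj : Function.Injective A) (hcard : #(univ.biUnion A) ≤ 6 * r - 9)
    {i j : Fin 6} (hij : i ≠ j) (hdisj : Disjoint (A i) (A j)) :
    3 ≤ #{k | (A k ∩ A i).Nonempty ∧ (A k ∩ A j).Nonempty} := by
  classical
  have hlinA : ∀ a b, a ≠ b → #(A a ∩ A b) ≤ 1 := fun a b h =>
    hlin _ (hA a) _ (hA b) (hinj.ne h)
  have hfree : (overlapStarGraph A).CliqueFree 3 :=
    cliqueFree_three_overlapStarGraph hlinA fun a b c hab hac hbc =>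
      inter_inter_nonempty_of_pairwise hpart h3 (hA a) (hA b) (hA c) (hinj.ne hab)
        (hinj.ne hac) (hinj.ne hbc)
  have hedges : 9 ≤ #(overlapStarGraph A).edgeFinset := by
    have := sum_card_le_card_biUnion_add_card_edgeFinset_overlapStarGraph hlinA
    simp only [hpart.card_eq (hA _), sum_const, card_univ, Fintype.card_fin, smul_eq_mul] at this
    omega
  have hnadj : ¬(overlapStarGraph A).Adj i j := fun h =>
    not_disjoint_iff_nonempty_inter.2 (overlapStarGraph_adj_inter_nonempty h) hdisj
  calc 3 ≤ #{k | (overlapStarGraph A).Adj i k ∧ (overlapStarGraph A).Adj j k} :=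
        SimpleGraph.three_le_card_commonNeighbors_of_cliqueFree_three hfree hedges hij hnadj
    _ ≤ _ := card_le_card fun k => by
        simpa only [mem_filter, mem_univ, true_and] using fun hk =>
          ⟨overlapStarGraph_adj_inter_nonempty hk.1.symm,
            overlapStarGraph_adj_inter_nonempty hk.2.symm⟩

end Hypergraph

theorem seventh_edge_small_intersection {V : Type*} [DecidableEq V] (r : ℕ) (hr : 3 ≤ r)
    (H : Finset (Finset V)) (part : V → Fin r)
    (hpart : ∀ A ∈ H, ∀ i : Fin r, (A.filter fun x => part x = i).card = 1)
    (hlin : ∀ A ∈ H, ∀ B ∈ H, A ≠ B → (A ∩ B).card ≤ 1)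
    (h3 : ¬ HasRainbowCycle H part 3) (h4 : ¬ HasRainbowCycle H part 4)
    (A : Fin 6 → Finset V) (hA : ∀ i, A i ∈ H) (hinj : Function.Injective A)
    (hcard : ((Finset.univ : Finset (Fin 6)).biUnion A).card ≤ 6 * r - 9) :
    ∀ B ∈ H, (∀ i, B ≠ A i) →
      (B ∩ (Finset.univ : Finset (Fin 6)).biUnion A).card ≤ 1 := by
  intro B hB hBA
  refine card_le_one.2 fun x hx y hy => by_contra fun hxy => ?_
  obtain ⟨i, -, hxi⟩ := mem_biUnion.1 (mem_inter.1 hx).2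
  obtain ⟨j, -, hyj⟩ := mem_biUnion.1 (mem_inter.1 hy).2
  have hxi' : x ∈ B ∩ A i := mem_inter.2 ⟨(mem_inter.1 hx).1, hxi⟩
  have hyj' : y ∈ B ∩ A j := mem_inter.2 ⟨(mem_inter.1 hy).1, hyj⟩
  have hdisj : Disjoint (A i) (A j) := Hypergraph.disjoint_of_mem_inter hpart hlin h3 hB
    (hA i) (hA j) (hBA i) (hBA j) hxy hxi' hyj'
  have hij : i ≠ j := by
    rintro rfl
    exact disjoint_left.1 hdisj hxi hxi
  exact h4 <| Hypergraph.hasRainbowCycle_four_of_three_le_card hpart hlin h3 hB (hA i) (hA j)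
    (hBA i) (hBA j) hxy hxi' hyj'
    (Hypergraph.three_le_card_filter_inter_nonempty hr hpart hlin h3 hA hinj hcard hij hdisj)
    (fun k _ => hA k) hinj.injOn (fun k _ => (hBA k).symm) fun k hk => (mem_filter.1 hk).2
end

section
/- Let r ≥ 4 and let H be an r-uniform r-partite linear hypergraph containing no rainbow cycles of length three or four, and assume that no vertex of H belongs to more than two edges of H. If A_1, A_2, A_3, A_4 are four pairwise disjoint edges of H, then there exists at most one edge B of H with B ∉ {A_1, A_2, A_3, A_4} such that |B ∩ (A_1 ∪ A_2 ∪ A_3 ∪ A_4)| = 4. -/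
/-!
A transversal edge `B ∉ {A₁, …, A₄}` meets each `Aᵢ` in at most one vertex by linearity, so in
exactly one vertex `bᵢ`. For a second one `C`, with `C ∩ Aᵢ = {cᵢ}`, the degree bound gives
`bᵢ ≠ cᵢ`, and since the parts of the `bᵢ` are distinct (and likewise for the `cᵢ`), each `bᵢ`
shares its part with at most one `cⱼ`. Four indices give six pairs but at most four such
coincidences, so some `i ≠ j` has `bᵢ, bⱼ, cⱼ, cᵢ` in four distinct parts, and
`bᵢ B bⱼ Aⱼ cⱼ C cᵢ Aᵢ` is a rainbow 4-cycle.
-/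

open Finset

open Function

theorem exists_ne_and_apply_ne_and_apply_ne {ι α : Type*} [Fintype ι]
    (hι : 4 ≤ Fintype.card ι) (p q : ι → α) (hq : Injective q) :
    ∃ i j, i ≠ j ∧ p i ≠ q j ∧ p j ≠ q i := by
  classical
  by_contra! hbad
  set S := (univ : Finset ι).offDiag.filter fun ij => p ij.1 = q ij.2
  have hS : #S ≤ Fintype.card ι :=
    card_le_card_of_injOn Prod.fst (fun _ _ => mem_univ _) fun a ha b hb hab => by
      simp only [S, coe_filter, Set.mem_ofPred_eq] at ha hb
      exact Prod.ext hab (hq (ha.2.symm.trans (hab ▸ hb.2)))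
  have hcover : (univ : Finset ι).offDiag ⊆ S ∪ S.image Prod.swap := by
    rintro ⟨i, j⟩ hij
    have hne : i ≠ j := (mem_offDiag.mp hij).2.2
    by_cases h : p i = q j
    · exact mem_union_left _ (mem_filter.mpr ⟨hij, h⟩)
    · refine mem_union_right _ (mem_image.mpr ⟨(j, i), mem_filter.mpr ⟨?_, hbad i j hne h⟩, rfl⟩)
      simpa [eq_comm] using hne
  have hcard := (card_le_card hcover).trans ((card_union_le _ _).trans
    (Nat.add_le_add_left card_image_le _))
  rw [offDiag_card, card_univ] at hcard
  have : Fintype.card ι ≤ Fintype.card ι * Fintype.card ι := Nat.le_mul_self _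
  nlinarith [Nat.sub_add_cancel this]

theorem Matrix.injective_vecFour_iff {α : Type*} {a b c d : α} :
    Injective ![a, b, c, d] ↔ a ≠ b ∧ a ≠ c ∧ a ≠ d ∧ b ≠ c ∧ b ≠ d ∧ c ≠ d := by
  simp only [Matrix.vecCons, Fin.cons_injective_iff, Set.mem_range, Fin.exists_fin_succ,
    Fin.cons_zero, Fin.cons_succ, Fin.exists_fin_zero, injective_of_subsingleton]
  grind

theorem Finset.injOn_of_card_filter_eq_le_one {V ι : Type*} [DecidableEq ι] {E : Finset V}
    {f : V → ι} (h : ∀ i, #(E.filter fun x => f x = i) ≤ 1) : Set.InjOn f E :=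
  fun x hx y hy hxy => card_le_one.mp (h (f y)) x (mem_filter.mpr ⟨hx, hxy⟩) y
    (mem_filter.mpr ⟨hy, rfl⟩)

theorem injective_of_mem_of_pairwise_disjoint {ι V : Type*} {A : ι → Finset V}
    (hA : Pairwise (Disjoint on A)) {b : ι → V} (hb : ∀ i, b i ∈ A i) : Injective b := by
  intro i j hij
  by_contra hne
  exact disjoint_left.mp (hA hne) (hb i) (hij ▸ hb j)

theorem card_inter_eq_one_of_card_inter_biUnion_eq {ι V : Type*} [Fintype ι] [DecidableEq V]
    {A : ι → Finset V} (hA : Pairwise (Disjoint on A)) {B : Finset V}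
    (hle : ∀ i, #(B ∩ A i) ≤ 1) (hcard : #(B ∩ univ.biUnion A) = Fintype.card ι) (i : ι) :
    #(B ∩ A i) = 1 := by
  have hsum : ∑ i, #(B ∩ A i) = ∑ _i : ι, 1 := by
    rw [sum_const, smul_eq_mul, mul_one, card_univ, ← hcard, inter_biUnion, card_biUnion]
    · exact fun i _ j _ hij => (hA hij).mono inter_subset_right inter_subset_right
  exact (sum_eq_sum_iff_of_le fun i _ => hle i).mp hsum i (mem_univ i)

theorem three_le_card_filter_mem {V : Type*} [DecidableEq V] {H : Finset (Finset V)} {x : V}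
    {E₁ E₂ E₃ : Finset V} (h₁ : E₁ ∈ H) (h₂ : E₂ ∈ H) (h₃ : E₃ ∈ H)
    (hx₁ : x ∈ E₁) (hx₂ : x ∈ E₂) (hx₃ : x ∈ E₃) (h₁₂ : E₁ ≠ E₂) (h₁₃ : E₁ ≠ E₃) (h₂₃ : E₂ ≠ E₃) :
    3 ≤ #(H.filter (x ∈ ·)) :=
  calc 3 = #{E₁, E₂, E₃} := (card_eq_three.mpr ⟨E₁, E₂, E₃, h₁₂, h₁₃, h₂₃, rfl⟩).symm
    _ ≤ #(H.filter (x ∈ ·)) := card_le_card <| by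
      simp only [insert_subset_iff, singleton_subset_iff, mem_filter]
      exact ⟨⟨h₁, hx₁⟩, ⟨h₂, hx₂⟩, ⟨h₃, hx₃⟩⟩

theorem hasRainbowCycle_four_s16 {V : Type*} {r : ℕ} {H : Finset (Finset V)} {part : V → Fin r}
    {v₀ v₁ v₂ v₃ : V} {E₀ E₁ E₂ E₃ : Finset V}
    (h₀ : E₀ ∈ H) (h₁ : E₁ ∈ H) (h₂ : E₂ ∈ H) (h₃ : E₃ ∈ H)
    (hE₀ : v₀ ∈ E₀ ∧ v₁ ∈ E₀) (hE₁ : v₁ ∈ E₁ ∧ v₂ ∈ E₁) (hE₂ : v₂ ∈ E₂ ∧ v₃ ∈ E₂)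
    (hE₃ : v₃ ∈ E₃ ∧ v₀ ∈ E₃)
    (hE : Injective ![E₀, E₁, E₂, E₃])
    (hpart : Injective ![part v₀, part v₁, part v₂, part v₃]) :
    HasRainbowCycle H part 4 := by
  have hpart' : Injective fun i => part (![v₀, v₁, v₂, v₃] i) := by
    convert hpart using 1
    funext i
    fin_cases i <;> rfl
  refine ⟨![v₀, v₁, v₂, v₃], ![E₀, E₁, E₂, E₃], hpart'.of_comp, hE, ?_, ?_, hpart'⟩
  · intro i
    fin_cases i <;> assumption
  · intro i
    fin_cases i <;> simpa [finRotate_apply]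

theorem hasRainbowCycle_four_of_two_transversals {ι V : Type*} [Fintype ι] {r : ℕ}
    {H : Finset (Finset V)} {part : V → Fin r} {A : ι → Finset V} (hA : ∀ i, A i ∈ H)
    (hdisj : Pairwise (Disjoint on A)) (hι : 4 ≤ Fintype.card ι) {B C : Finset V}
    (hB : B ∈ H) (hC : C ∈ H) (hBA : ∀ i, B ≠ A i) (hCA : ∀ i, C ≠ A i) (hBC : B ≠ C)
    {b c : ι → V} (hb : ∀ i, b i ∈ B ∧ b i ∈ A i) (hc : ∀ i, c i ∈ C ∧ c i ∈ A i)
    (hpb : Injective (part ∘ b)) (hpc : Injective (part ∘ c))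
    (hpbc : ∀ i, part (b i) ≠ part (c i)) :
    HasRainbowCycle H part 4 := by
  obtain ⟨i, j, hij, hbc, hcb⟩ := exists_ne_and_apply_ne_and_apply_ne hι (part ∘ b) (part ∘ c) hpc
  have hAji : A j ≠ A i := fun h => disjoint_left.mp (hdisj hij) (hb i).2 (h ▸ (hb i).2)
  -- the cycle `b i, B, b j, A j, c j, C, c i, A i`
  exact hasRainbowCycle_four_s16 hB (hA j) hC (hA i) ⟨(hb i).1, (hb j).1⟩ ⟨(hb j).2, (hc j).2⟩
    ⟨(hc j).1, (hc i).1⟩ ⟨(hc i).2, (hb i).2⟩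
    (Matrix.injective_vecFour_iff.mpr ⟨hBA j, hBC, hBA i, (hCA j).symm, hAji, hCA i⟩)
    (Matrix.injective_vecFour_iff.mpr ⟨hpb.ne hij, hbc, hpbc i, hpbc j, hcb, hpc.ne hij.symm⟩)

theorem at_most_one_transversal_edge_general {V : Type*} [DecidableEq V] (r : ℕ)
    (H : Finset (Finset V)) (part : V → Fin r)
    (hpart : ∀ A ∈ H, ∀ i : Fin r, (A.filter fun x => part x = i).card = 1)
    (hlin : ∀ A ∈ H, ∀ B ∈ H, A ≠ B → (A ∩ B).card ≤ 1)
    (h4 : ¬ HasRainbowCycle H part 4)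
    (hdeg : ∀ x : V, (H.filter fun A => x ∈ A).card ≤ 2)
    (A : Fin 4 → Finset V) (hA : ∀ i, A i ∈ H)
    (hdisj : ∀ i j, i ≠ j → Disjoint (A i) (A j)) :
    ∀ B ∈ H, ∀ C ∈ H, (∀ i, B ≠ A i) → (∀ i, C ≠ A i) →
      (B ∩ (Finset.univ : Finset (Fin 4)).biUnion A).card = 4 →
      (C ∩ (Finset.univ : Finset (Fin 4)).biUnion A).card = 4 → B = C := by
  intro B hB C hC hBA hCA hBcard hCcard
  by_contra hBC
  have hinj : ∀ E ∈ H, Set.InjOn part E := fun E hE =>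
    Finset.injOn_of_card_filter_eq_le_one fun i => (hpart E hE i).le
  have hmeet : ∀ E ∈ H, (∀ i, E ≠ A i) → #(E ∩ univ.biUnion A) = 4 → ∀ i, (E ∩ A i).Nonempty :=
    fun E hE hEA hcard i => card_pos.mp <| by
      rw [card_inter_eq_one_of_card_inter_biUnion_eq hdisj
        (fun i => hlin E hE _ (hA i) (hEA i)) (by simpa using hcard) i]
      exact one_pos
  choose b hb using hmeet B hB hBA hBcard
  choose c hc using hmeet C hC hCA hCcard
  simp only [mem_inter] at hb hc
  have htransversal : ∀ E ∈ H, ∀ e : Fin 4 → V, (∀ i, e i ∈ E ∧ e i ∈ A i) →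
      Injective (part ∘ e) := fun E hE e he i j h =>
    injective_of_mem_of_pairwise_disjoint hdisj (fun i => (he i).2)
      (hinj E hE (he i).1 (he j).1 h)
  have hpbc : ∀ i, part (b i) ≠ part (c i) := fun i h => by
    have hbc : b i = c i := hinj (A i) (hA i) (hb i).2 (hc i).2 h
    have := three_le_card_filter_mem (hA i) hB hC (hb i).2 (hb i).1 (hbc ▸ (hc i).1)
      (hBA i).symm (hCA i).symm hBC
    have := hdeg (b i)
    omega
  exact h4 (hasRainbowCycle_four_of_two_transversals hA hdisj (by simp) hB hC hBA hCA hBC hb hc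
    (htransversal B hB b hb) (htransversal C hC c hc) hpbc)

theorem at_most_one_transversal_edge {V : Type*} [DecidableEq V] (r : ℕ) (hr : 4 ≤ r)
    (H : Finset (Finset V)) (part : V → Fin r)
    (hpart : ∀ A ∈ H, ∀ i : Fin r, (A.filter fun x => part x = i).card = 1)
    (hlin : ∀ A ∈ H, ∀ B ∈ H, A ≠ B → (A ∩ B).card ≤ 1)
    (h3 : ¬ HasRainbowCycle H part 3) (h4 : ¬ HasRainbowCycle H part 4)
    (hdeg : ∀ x : V, (H.filter fun A => x ∈ A).card ≤ 2)
    (A : Fin 4 → Finset V) (hA : ∀ i, A i ∈ H)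
    (hdisj : ∀ i j, i ≠ j → Disjoint (A i) (A j)) :
    ∀ B ∈ H, ∀ C ∈ H, (∀ i, B ≠ A i) → (∀ i, C ≠ A i) →
      (B ∩ (Finset.univ : Finset (Fin 4)).biUnion A).card = 4 →
      (C ∩ (Finset.univ : Finset (Fin 4)).biUnion A).card = 4 → B = C :=
  at_most_one_transversal_edge_general r H part hpart hlin h4 hdeg A hA hdisj
end

section
/- Let e ≥ 4 and r ≥ 3 be integers and let H be an r-uniform r-partite linear hypergraph that is G_r(3r−3, 3)-free and G_r((e−1)(r−2)+3, e−1)-free. Suppose A_1, …, A_e are e distinct edges of H with |A_1 ∪ ⋯ ∪ A_e| ≤ e(r−2)+3. Then for every i ∈ {1, …, e} there exist three distinct indices i_1, i_2, i_3 ∈ {1, …, e} \ {i} such that: (1) |A_i ∩ (A_{i_1} ∪ A_{i_2} ∪ A_{i_3})| = 3 with A_i meeting each of A_{i_1}, A_{i_2}, A_{i_3} in a distinct vertex; (2) A_{i_1}, A_{i_2}, A_{i_3} are pairwise disjoint; (3) |A_{i_1} ∪ A_{i_2} ∪ A_{i_3} ∪ A_i| = 4r−3. -/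
open Finset

/-! The `e - 1` edges other than `A i` already span at least `(e - 1)(r - 2) + 4` vertices, while
all `e` edges span at most `e(r - 2) + 3`; so `A i` meets the others in at least three vertices.
By linearity each of them is the unique common vertex of `A i` with some other edge, and these
three edges are distinct. Any two of them, `B` and `C`, span together with `A i` exactly
`3r - 2 - |B ∩ C|` vertices, so `G_r(3r - 3, 3)`-freeness forces them to be disjoint. -/

section

variable {V : Type*} [DecidableEq V]

theorem card_eq_of_card_filter_eq_one {α ι : Type*} [Fintype ι] [DecidableEq ι] (f : α → ι)
    {s : Finset α} (h : ∀ i, (s.filter fun x => f x = i).card = 1) : s.card = Fintype.card ι := by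
  rw [card_eq_sum_card_fiberwise fun x _ => mem_univ (f x)]
  simp [h]

theorem inter_eq_singleton_of_card_inter_le_one {s t : Finset V} {x : V} (h : (s ∩ t).card ≤ 1)
    (hs : x ∈ s) (ht : x ∈ t) : s ∩ t = {x} :=
  eq_singleton_iff_unique_mem.mpr
    ⟨mem_inter.mpr ⟨hs, ht⟩, fun _ hy => card_le_one.mp h _ hy _ (mem_inter.mpr ⟨hs, ht⟩)⟩

theorem GFree.le_card_biUnion {H : Finset (Finset V)} {v e : ℕ} (hH : GFree H v e) {ι : Type*}
    {s : Finset ι} {A : ι → Finset V} (hA : ∀ i ∈ s, A i ∈ H) (hinj : Set.InjOn A s)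
    (hs : s.card = e) : v + 1 ≤ (s.biUnion A).card := by
  have := hH (s.image A) (fun _ hB => by obtain ⟨i, hi, rfl⟩ := mem_image.mp hB; exact hA i hi)
    (by rw [card_image_of_injOn hinj, hs])
  rwa [image_biUnion] at this

theorem GFree.disjoint_of_inter_eq_singleton {H : Finset (Finset V)} {r : ℕ}
    (hH : GFree H (3 * r - 3) 3) (hunif : ∀ A ∈ H, A.card = r) {B C D : Finset V}
    (hB : B ∈ H) (hC : C ∈ H) (hD : D ∈ H) {x y : V} (hx : D ∩ B = {x}) (hy : D ∩ C = {y})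
    (hxy : x ≠ y) : Disjoint B C := by
  have hxD : x ∈ D := mem_of_mem_inter_left (hx ▸ mem_singleton_self x)
  have hyD : y ∈ D := mem_of_mem_inter_left (hy ▸ mem_singleton_self y)
  have hBC : B ≠ C := by rintro rfl; exact hxy (singleton_injective (hx.symm.trans hy))
  have hBD : B ≠ D := by
    rintro rfl; rw [inter_self] at hx; exact hxy (mem_singleton.mp (hx ▸ hyD)).symm
  have hCD : C ≠ D := by
    rintro rfl; rw [inter_self] at hy; exact hxy (mem_singleton.mp (hy ▸ hxD))
  have hspan := hH {B, C, D} (by simp [insert_subset_iff, hB, hC, hD])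
    (card_eq_three.mpr ⟨B, C, D, hBC, hBD, hCD, rfl⟩)
  have hunion : ({B, C, D} : Finset (Finset V)).biUnion id = B ∪ C ∪ D := by
    ext; simp
  have hmeet : (B ∪ C) ∩ D = {x, y} := by
    rw [union_inter_distrib_right, inter_comm B, inter_comm C, hx, hy]; rfl
  have h₁ := card_union_add_card_inter (B ∪ C) D
  have h₂ := card_union_add_card_inter B C
  rw [hmeet, card_pair hxy, hunif D hD] at h₁
  rw [hunif B hB, hunif C hC] at h₂
  rw [hunion] at hspan
  rw [disjoint_iff_inter_eq_empty, ← card_eq_zero]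
  omega

theorem card_inter_biUnion_erase_add_card_biUnion {ι : Type*} [DecidableEq ι] {s : Finset ι}
    (A : ι → Finset V) {i : ι} (hi : i ∈ s) :
    (A i ∩ (s.erase i).biUnion A).card + (s.biUnion A).card =
      (A i).card + ((s.erase i).biUnion A).card := by
  have hsplit : s.biUnion A = A i ∪ (s.erase i).biUnion A := by
    rw [← biUnion_insert, insert_erase hi]
  rw [hsplit, add_comm, card_union_add_card_inter]

theorem exists_inter_eq_singleton_of_mem_biUnion_erase {ι : Type*} [DecidableEq ι]
    {s : Finset ι} {A : ι → Finset V} (hlin : ∀ j k, j ≠ k → (A j ∩ A k).card ≤ 1) {i : ι}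
    {x : V} (hx : x ∈ A i ∩ (s.erase i).biUnion A) : ∃ j ≠ i, A i ∩ A j = {x} := by
  obtain ⟨hxi, hxU⟩ := mem_inter.mp hx
  obtain ⟨j, hj, hxj⟩ := mem_biUnion.mp hxU
  have hji : j ≠ i := ne_of_mem_erase hj
  exact ⟨j, hji, inter_eq_singleton_of_card_inter_le_one (hlin i j hji.symm) hxi hxj⟩

theorem card_inter_union_union_eq_three {D B₁ B₂ B₃ : Finset V} {x₁ x₂ x₃ : V}
    (h₁ : D ∩ B₁ = {x₁}) (h₂ : D ∩ B₂ = {x₂}) (h₃ : D ∩ B₃ = {x₃})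
    (h₁₂ : x₁ ≠ x₂) (h₁₃ : x₁ ≠ x₃) (h₂₃ : x₂ ≠ x₃) : (D ∩ (B₁ ∪ B₂ ∪ B₃)).card = 3 := by
  rw [inter_union_distrib_left, inter_union_distrib_left, h₁, h₂, h₃]
  exact card_eq_three.mpr ⟨x₁, x₂, x₃, h₁₂, h₁₃, h₂₃, by ext; simp⟩

theorem card_union_union_union_add_card_inter {D B₁ B₂ B₃ : Finset V} (d₁₂ : Disjoint B₁ B₂)
    (d₁₃ : Disjoint B₁ B₃) (d₂₃ : Disjoint B₂ B₃) :
    (B₁ ∪ B₂ ∪ B₃ ∪ D).card + (D ∩ (B₁ ∪ B₂ ∪ B₃)).card =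
      B₁.card + B₂.card + B₃.card + D.card := by
  rw [inter_comm, card_union_add_card_inter,
    card_union_of_disjoint (disjoint_union_left.mpr ⟨d₁₃, d₂₃⟩), card_union_of_disjoint d₁₂]

end

theorem three_special_edges_general {V : Type*} [DecidableEq V] (r e : ℕ)
    (H : Finset (Finset V)) (part : V → Fin r)
    (hpart : ∀ A ∈ H, ∀ i : Fin r, (A.filter fun x => part x = i).card = 1)
    (hlin : ∀ A ∈ H, ∀ B ∈ H, A ≠ B → (A ∩ B).card ≤ 1)
    (hfree3 : GFree H (3 * r - 3) 3)
    (hfree : GFree H ((e - 1) * (r - 2) + 3) (e - 1))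
    (A : Fin e → Finset V) (hA : ∀ i, A i ∈ H) (hinj : Function.Injective A)
    (hcard : ((Finset.univ : Finset (Fin e)).biUnion A).card ≤ e * (r - 2) + 3) :
    ∀ i : Fin e, ∃ i₁ i₂ i₃ : Fin e,
      i₁ ≠ i ∧ i₂ ≠ i ∧ i₃ ≠ i ∧ i₁ ≠ i₂ ∧ i₁ ≠ i₃ ∧ i₂ ≠ i₃ ∧
      (A i ∩ A i₁).card = 1 ∧ (A i ∩ A i₂).card = 1 ∧ (A i ∩ A i₃).card = 1 ∧
      (A i ∩ (A i₁ ∪ A i₂ ∪ A i₃)).card = 3 ∧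
      Disjoint (A i₁) (A i₂) ∧ Disjoint (A i₁) (A i₃) ∧ Disjoint (A i₂) (A i₃) ∧
      (A i₁ ∪ A i₂ ∪ A i₃ ∪ A i).card = 4 * r - 3 := by
  have hunif : ∀ B ∈ H, B.card = r := fun B hB => by
    simpa using card_eq_of_card_filter_eq_one part (hpart B hB)
  have hAr : ∀ j, (A j).card = r := fun j => hunif _ (hA j)
  intro i
  have hrest := hfree.le_card_biUnion (s := univ.erase i) (fun j _ => hA j) hinj.injOn (by simp)
  have hmeet := card_inter_biUnion_erase_add_card_biUnion A (mem_univ i)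
  have hmul : e * (r - 2) = (e - 1) * (r - 2) + (r - 2) := by
    rw [← Nat.succ_mul, Nat.succ_eq_add_one, Nat.sub_add_cancel (Fin.pos i)]
  have hthree : 3 ≤ (A i ∩ (univ.erase i).biUnion A).card := by
    have := card_le_card (inter_subset_left (s₁ := A i) (s₂ := (univ.erase i).biUnion A))
    have := hAr i
    omega
  obtain ⟨T, hT, hT3⟩ := exists_subset_card_eq hthree
  obtain ⟨x₁, x₂, x₃, h₁₂, h₁₃, h₂₃, rfl⟩ := card_eq_three.mp hT3
  have hlinA : ∀ j k, j ≠ k → (A j ∩ A k).card ≤ 1 :=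
    fun j k h => hlin _ (hA j) _ (hA k) (hinj.ne h)
  have hpick {x} (hx : x ∈ ({x₁, x₂, x₃} : Finset V)) :=
    exists_inter_eq_singleton_of_mem_biUnion_erase hlinA (hT hx)
  obtain ⟨j₁, hj₁, hx₁⟩ := hpick (by simp : x₁ ∈ _)
  obtain ⟨j₂, hj₂, hx₂⟩ := hpick (by simp : x₂ ∈ _)
  obtain ⟨j₃, hj₃, hx₃⟩ := hpick (by simp : x₃ ∈ _)
  have hdisj {j k x y} (hx : A i ∩ A j = {x}) (hy : A i ∩ A k = {y}) (hxy : x ≠ y) :=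
    hfree3.disjoint_of_inter_eq_singleton hunif (hA j) (hA k) (hA i) hx hy hxy
  have hne {j k x y} (hx : A i ∩ A j = {x}) (hy : A i ∩ A k = {y}) (hxy : x ≠ y) : j ≠ k := by
    rintro rfl; exact hxy (singleton_injective (hx.symm.trans hy))
  have h3 := card_inter_union_union_eq_three hx₁ hx₂ hx₃ h₁₂ h₁₃ h₂₃
  have hsum := card_union_union_union_add_card_inter (D := A i) (hdisj hx₁ hx₂ h₁₂)
    (hdisj hx₁ hx₃ h₁₃) (hdisj hx₂ hx₃ h₂₃)
  refine ⟨j₁, j₂, j₃, hj₁, hj₂, hj₃, hne hx₁ hx₂ h₁₂, hne hx₁ hx₃ h₁₃, hne hx₂ hx₃ h₂₃,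
    by simp [hx₁], by simp [hx₂], by simp [hx₃], h3, hdisj hx₁ hx₂ h₁₂, hdisj hx₁ hx₃ h₁₃,
    hdisj hx₂ hx₃ h₂₃, by rw [hAr, hAr, hAr, hAr, h3] at hsum; omega⟩

theorem three_special_edges {V : Type*} [DecidableEq V] (r e : ℕ) (hr : 3 ≤ r) (he : 4 ≤ e)
    (H : Finset (Finset V)) (part : V → Fin r)
    (hpart : ∀ A ∈ H, ∀ i : Fin r, (A.filter fun x => part x = i).card = 1)
    (hlin : ∀ A ∈ H, ∀ B ∈ H, A ≠ B → (A ∩ B).card ≤ 1)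
    (hfree3 : GFree H (3 * r - 3) 3)
    (hfree : GFree H ((e - 1) * (r - 2) + 3) (e - 1))
    (A : Fin e → Finset V) (hA : ∀ i, A i ∈ H) (hinj : Function.Injective A)
    (hcard : ((Finset.univ : Finset (Fin e)).biUnion A).card ≤ e * (r - 2) + 3) :
    ∀ i : Fin e, ∃ i₁ i₂ i₃ : Fin e,
      i₁ ≠ i ∧ i₂ ≠ i ∧ i₃ ≠ i ∧ i₁ ≠ i₂ ∧ i₁ ≠ i₃ ∧ i₂ ≠ i₃ ∧
      (A i ∩ A i₁).card = 1 ∧ (A i ∩ A i₂).card = 1 ∧ (A i ∩ A i₃).card = 1 ∧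
      (A i ∩ (A i₁ ∪ A i₂ ∪ A i₃)).card = 3 ∧
      Disjoint (A i₁) (A i₂) ∧ Disjoint (A i₁) (A i₃) ∧ Disjoint (A i₂) (A i₃) ∧
      (A i₁ ∪ A i₂ ∪ A i₃ ∪ A i).card = 4 * r - 3 :=
  three_special_edges_general r e H part hpart hlin hfree3 hfree A hA hinj hcard
end
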